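/- arXiv:2206.08001 — 7 statements merged into one kernel-verified Lean document; each statement's English description precedes it below -/
import Mathlib

section
/- Let N be a positive integer, let Ψ : ℤ → ℝ, and let δ₁, δ₂ > 0. Suppose that: (1) Ψ(n) ≠ 0 only if n = p - 1 for some prime p; (2) Σ_{n=1}^{N} Ψ(n) · cos(2π n θ) ≥ -δ₁ N for all real θ; (3) Σ_{n=1}^{N} Ψ(n) ≥ δ₂ N. Then every subset A of {1, ..., N} such that no difference of two elements of A equals p - 1 for a prime p satisfies |A| ≤ (2δ₁/(δ₁ + δ₂)) · N. -/
open Finset Complex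

private lemma sum_exp_eq (M : ℕ) (hM : 0 < M) (m : ℤ) :
    ∑ j ∈ Finset.range M, Complex.exp ((2 * Real.pi * m * j / M : ℝ) * Complex.I)
      = if (M : ℤ) ∣ m then (M : ℂ) else 0 := by
  have hMR : (M : ℝ) ≠ 0 := Nat.cast_ne_zero.mpr hM.ne'
  set ζ : ℂ := Complex.exp ((2 * Real.pi * m / M : ℝ) * Complex.I) with hζ
  have hterm : ∀ j : ℕ,
      Complex.exp ((2 * Real.pi * m * j / M : ℝ) * Complex.I) = ζ ^ j := by
    intro j
    rw [hζ, ← Complex.exp_nat_mul]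
    congr 1
    push_cast
    ring
  simp_rw [hterm]
  by_cases hdvd : (M : ℤ) ∣ m
  · obtain ⟨k, rfl⟩ := hdvd
    have hζ1 : ζ = 1 := by
      rw [hζ]
      have harg : (2 * Real.pi * ((M : ℤ) * k : ℤ) / M : ℝ) = (k : ℝ) * (2 * Real.pi) := by
        push_cast
        field_simp
      rw [harg]
      have := Complex.exp_int_mul_two_pi_mul_I k
      rw [← this]
      congr 1
      push_cast
      ring
    simp [hζ1]
  · have hζM : ζ ^ M = 1 := by
      rw [hζ, ← Complex.exp_nat_mul]
      have harg : (M : ℂ) * ((2 * Real.pi * m / M : ℝ) * Complex.I)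
          = (m : ℤ) * (2 * Real.pi * Complex.I) := by
        have hMC : (M : ℂ) ≠ 0 := Nat.cast_ne_zero.mpr hM.ne'
        push_cast
        field_simp
      rw [harg, Complex.exp_int_mul_two_pi_mul_I]
    have hζ1 : ζ ≠ 1 := by
      intro h
      rw [hζ, Complex.exp_eq_one_iff] at h
      obtain ⟨k, hk⟩ := h
      apply hdvd
      have hk' : ((2 * Real.pi * m / M : ℝ) : ℂ) * Complex.I
          = ((k * (2 * Real.pi) : ℝ) : ℂ) * Complex.I := by
        rw [hk]; push_cast; ring
      have hre : (2 * Real.pi * m / M : ℝ) = k * (2 * Real.pi) := by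
        have := mul_right_cancel₀ Complex.I_ne_zero hk'
        exact_mod_cast this
      have hpi : (2 * Real.pi) ≠ 0 := by positivity
      have : (m : ℝ) = k * M := by
        field_simp at hre
        nlinarith [hre, Real.pi_pos]
      have hm : m = k * M := by exact_mod_cast this
      exact ⟨k, by rw [hm]; ring⟩
    rw [geom_sum_eq hζ1, hζM]
    simp [hdvd]

/-- Proposition 2.1 (first part): if `Ψ` is supported on shifted primes, has exponential sums
bounded below by `-δ₁N`, and total mass at least `δ₂N`, then any subset of `{1, …, N}` avoiding
differences of the form `p - 1` (`p` prime) has size at most `(2δ₁/(δ₁+δ₂))·N`. -/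
theorem main_construct_bound (N : ℕ) (hN : 0 < N) (Ψ : ℤ → ℝ) (δ₁ δ₂ : ℝ)
    (hδ₁ : 0 < δ₁) (hδ₂ : 0 < δ₂)
    (h1 : ∀ n : ℤ, Ψ n ≠ 0 → ∃ p : ℕ, p.Prime ∧ n = (p : ℤ) - 1)
    (h2 : ∀ θ : ℝ,
      -(δ₁ * N) ≤ ∑ n ∈ Finset.Icc 1 N, Ψ (n : ℤ) * Real.cos (2 * Real.pi * (n : ℝ) * θ))
    (h3 : δ₂ * N ≤ ∑ n ∈ Finset.Icc 1 N, Ψ (n : ℤ))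
    (A : Finset ℕ) (hA : A ⊆ Finset.Icc 1 N)
    (hAdiff : ∀ a ∈ A, ∀ a' ∈ A, ∀ p : ℕ, p.Prime → (a : ℤ) - (a' : ℤ) ≠ (p : ℤ) - 1) :
    (A.card : ℝ) ≤ (2 * δ₁ / (δ₁ + δ₂)) * N := by
  classical
  set M := 2 * N with hMdef
  have hMpos : 0 < M := by omega
  set S : ℕ → ℂ := fun j => ∑ a ∈ A, Complex.exp ((2 * Real.pi * a * j / M : ℝ) * Complex.I)
    with hS
  set F : ℕ → ℝ := fun j => Complex.normSq (S j) with hF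
  have conj_exp : ∀ x : ℝ,
      (starRingEnd ℂ) (Complex.exp ((x : ℝ) * Complex.I)) = Complex.exp ((-x : ℝ) * Complex.I) := by
    intro x
    rw [← Complex.exp_conj]
    congr 1
    simp [Complex.conj_I]
  have exp_add' : ∀ u v : ℝ,
      Complex.exp ((u : ℝ) * Complex.I) * Complex.exp ((v : ℝ) * Complex.I)
        = Complex.exp (((u + v : ℝ) : ℂ) * Complex.I) := by
    intro u v
    rw [← Complex.exp_add]
    congr 1
    push_cast
    ring
  -- key complex identity
  have key : ∀ n : ℕ, n ≤ N →
      ∑ j ∈ Finset.range M, (F j : ℂ) * Complex.exp ((2 * Real.pi * n * j / M : ℝ) * Complex.I)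
        = (M : ℂ) * ∑ a ∈ A, ∑ a' ∈ A, (if (a' : ℤ) = (a : ℤ) + n then (1 : ℂ) else 0) := by
    intro n hn
    have expand : ∀ j : ℕ,
        (F j : ℂ) * Complex.exp ((2 * Real.pi * n * j / M : ℝ) * Complex.I)
          = ∑ a ∈ A, ∑ a' ∈ A,
              Complex.exp ((2 * Real.pi * (((a : ℤ) - a' + n : ℤ) : ℝ) * j / M : ℝ)
                * Complex.I) := by
      intro j
      have h0 : (F j : ℂ) = S j * (starRingEnd ℂ) (S j) := (Complex.mul_conj _).symm
      rw [h0, hS]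
      simp only [map_sum, conj_exp]
      rw [Finset.sum_mul_sum, Finset.sum_mul]
      refine Finset.sum_congr rfl fun a _ => ?_
      rw [Finset.sum_mul]
      refine Finset.sum_congr rfl fun a' _ => ?_
      rw [exp_add', exp_add']
      congr 1
      push_cast
      ring
    simp_rw [expand]
    rw [Finset.sum_comm, Finset.mul_sum]
    refine Finset.sum_congr rfl fun a ha => ?_
    rw [Finset.sum_comm, Finset.mul_sum]
    refine Finset.sum_congr rfl fun a' ha' => ?_
    rw [sum_exp_eq M hMpos]
    have ha1 := Finset.mem_Icc.mp (hA ha)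
    have ha'1 := Finset.mem_Icc.mp (hA ha')
    by_cases h : (a' : ℤ) = (a : ℤ) + n
    · have hz : ((a : ℤ) - a' + n) = 0 := by omega
      rw [hz, if_pos (dvd_zero _), if_pos h, mul_one]
    · have hnd : ¬ ((M : ℤ) ∣ ((a : ℤ) - a' + n)) := by
        intro hdvd
        have := Int.eq_zero_of_abs_lt_dvd hdvd (by
          rw [abs_lt]
          constructor <;> [skip; skip] <;> push_cast <;> omega)
        omega
      rw [if_neg hnd, if_neg h, mul_zero]
  -- real parts
  have re_eq : ∀ n : ℕ,
      (∑ j ∈ Finset.range M,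
        (F j : ℂ) * Complex.exp ((2 * Real.pi * n * j / M : ℝ) * Complex.I)).re
      = ∑ j ∈ Finset.range M, F j * Real.cos (2 * Real.pi * n * ((j : ℝ) / M)) := by
    intro n
    rw [Complex.re_sum]
    refine Finset.sum_congr rfl fun j _ => ?_
    rw [Complex.re_ofReal_mul, Complex.exp_ofReal_mul_I_re]
    ring_nf
  -- Claim 1
  have claim1 : ∑ j ∈ Finset.range M, F j = (M : ℝ) * A.card := by
    have hk := key 0 (Nat.zero_le N)
    have hinner : ∑ a ∈ A, ∑ a' ∈ A, (if (a' : ℤ) = (a : ℤ) + (0 : ℕ) then (1 : ℂ) else 0)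
        = (A.card : ℂ) := by
      rw [Finset.sum_congr rfl (fun a ha => ?_)]
      · rw [Finset.sum_const, nsmul_eq_mul, mul_one]
      · have : ∀ a' : ℕ, ((a' : ℤ) = (a : ℤ) + (0 : ℕ)) ↔ a' = a := by
          intro a'; constructor <;> intro h <;> omega
        simp_rw [this]
        rw [Finset.sum_ite_eq' A a (fun _ => (1 : ℂ)), if_pos ha]
    rw [hinner] at hk
    have := congrArg Complex.re hk
    rw [re_eq 0] at this
    simp only [Nat.cast_zero, mul_zero, zero_mul, zero_div, Real.cos_zero, mul_one] at this
    rw [this]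
    norm_num
  -- Claim 2
  have claim2 : ∀ n ∈ Finset.Icc 1 N,
      Ψ (n : ℤ) * ∑ j ∈ Finset.range M, F j * Real.cos (2 * Real.pi * n * ((j : ℝ) / M)) = 0 := by
    intro n hn
    by_cases hΨ : Ψ (n : ℤ) = 0
    · rw [hΨ, zero_mul]
    · obtain ⟨p, hp, hpn⟩ := h1 n hΨ
      have hz : ∑ a ∈ A, ∑ a' ∈ A, (if (a' : ℤ) = (a : ℤ) + n then (1 : ℂ) else 0) = 0 := by
        refine Finset.sum_eq_zero fun a ha => Finset.sum_eq_zero fun a' ha' => ?_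
        rw [if_neg]
        intro h
        exact hAdiff a' ha' a ha p hp (by omega)
      have hk := key n (Finset.mem_Icc.mp hn).2
      rw [hz, mul_zero] at hk
      have := congrArg Complex.re hk
      rw [re_eq n] at this
      simp only [Complex.zero_re] at this
      rw [this, mul_zero]
  -- main identity
  have main : ∑ j ∈ Finset.range M,
      F j * (δ₁ * N + ∑ n ∈ Finset.Icc 1 N, Ψ (n : ℤ)
        * Real.cos (2 * Real.pi * (n : ℝ) * ((j : ℝ) / M)))
      = δ₁ * N * ((M : ℝ) * A.card) := by
    have hsplit : ∀ j : ℕ,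
        F j * (δ₁ * N + ∑ n ∈ Finset.Icc 1 N, Ψ (n : ℤ)
          * Real.cos (2 * Real.pi * (n : ℝ) * ((j : ℝ) / M)))
        = F j * (δ₁ * N) + ∑ n ∈ Finset.Icc 1 N, Ψ (n : ℤ)
            * (F j * Real.cos (2 * Real.pi * (n : ℝ) * ((j : ℝ) / M))) := by
      intro j
      rw [mul_add, Finset.mul_sum]
      congr 1
      exact Finset.sum_congr rfl fun n _ => by ring
    simp_rw [hsplit]
    rw [Finset.sum_add_distrib, Finset.sum_comm]
    have hz : ∑ n ∈ Finset.Icc 1 N, ∑ j ∈ Finset.range M,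
        Ψ (n : ℤ) * (F j * Real.cos (2 * Real.pi * (n : ℝ) * ((j : ℝ) / M))) = 0 := by
      refine Finset.sum_eq_zero fun n hn => ?_
      rw [← Finset.mul_sum]
      exact claim2 n hn
    rw [hz, add_zero, ← Finset.sum_mul, claim1]
    ring
  -- lower bound for the sum
  have hGnonneg : ∀ j : ℕ, 0 ≤ δ₁ * N + ∑ n ∈ Finset.Icc 1 N, Ψ (n : ℤ)
      * Real.cos (2 * Real.pi * (n : ℝ) * ((j : ℝ) / M)) := by
    intro j
    have := h2 ((j : ℝ) / M)
    linarith
  have hF0 : F 0 = (A.card : ℝ) ^ 2 := by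
    have hS0 : S 0 = (A.card : ℂ) := by
      rw [hS]
      simp
    rw [hF]
    simp only [hS0, Complex.normSq_natCast]
    ring
  have hG0 : (δ₁ + δ₂) * N ≤ δ₁ * N + ∑ n ∈ Finset.Icc 1 N, Ψ (n : ℤ)
      * Real.cos (2 * Real.pi * (n : ℝ) * (((0 : ℕ) : ℝ) / M)) := by
    have : ∀ n ∈ Finset.Icc 1 N, Ψ (n : ℤ)
        * Real.cos (2 * Real.pi * (n : ℝ) * (((0 : ℕ) : ℝ) / M)) = Ψ (n : ℤ) := by
      intro n _
      norm_num
    rw [Finset.sum_congr rfl this]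
    have := h3
    nlinarith
  have lower : (A.card : ℝ) ^ 2 * ((δ₁ + δ₂) * N) ≤ ∑ j ∈ Finset.range M,
      F j * (δ₁ * N + ∑ n ∈ Finset.Icc 1 N, Ψ (n : ℤ)
        * Real.cos (2 * Real.pi * (n : ℝ) * ((j : ℝ) / M))) := by
    calc (A.card : ℝ) ^ 2 * ((δ₁ + δ₂) * N)
        ≤ F 0 * (δ₁ * N + ∑ n ∈ Finset.Icc 1 N, Ψ (n : ℤ)
          * Real.cos (2 * Real.pi * (n : ℝ) * (((0 : ℕ) : ℝ) / M))) := by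
          rw [hF0]
          exact mul_le_mul_of_nonneg_left hG0 (sq_nonneg _)
      _ ≤ _ := Finset.single_le_sum
          (fun j _ => mul_nonneg (Complex.normSq_nonneg _) (hGnonneg j))
          (Finset.mem_range.mpr hMpos)
  rw [main] at lower
  -- final algebra
  have hNpos : (0 : ℝ) < N := Nat.cast_pos.mpr hN
  have hMcast : (M : ℝ) = 2 * N := by rw [hMdef]; push_cast; ring
  rw [hMcast] at lower
  rcases Nat.eq_zero_or_pos A.card with hc | hc
  · rw [hc]
    push_cast
    positivity
  · have hcpos : (0 : ℝ) < A.card := Nat.cast_pos.mpr hc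
    rw [div_mul_eq_mul_div, le_div_iff₀ (by positivity)]
    nlinarith [lower, mul_pos hcpos hNpos]
end

section
/- Let q and r be squarefree positive integers, let b be an integer coprime to r, and let d be a positive integer. Then the number of a ∈ {1, ..., q} with gcd(a,q) = 1 and denom(a/q + b/r) = d is at most d · gcd(q,r)/r. -/
/-!
Write `q = q' g` and `r = r' g` with `g = gcd q r`, so that `a/q + b/r = (a r' + b q') / (q' g r')`.
If this has denominator `d`, then `m = q' g r' / d` divides `a r' + b q'`. Any common divisor of
`m` and `r'` then divides `b q'`, which is coprime to `r'`; so `m` is coprime to `r'`. Hence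
`m ∣ q`, and all admissible `a` lie in a single residue class modulo `m`, which meets `[1, q]` in
`q / m = d g / r` points.
-/

open Finset

theorem Rat.den_dvd_of_mul_eq_intCast {x : ℚ} {L : ℕ} {N : ℤ} (h : x * L = N) : x.den ∣ L := by
  rcases eq_or_ne L 0 with rfl | hL
  · exact dvd_zero _
  have hx : x = Rat.divInt N L := by
    rw [Rat.divInt_eq_div, ← h, Int.cast_natCast, mul_div_cancel_right₀ _ (by exact_mod_cast hL)]
  exact Int.natCast_dvd_natCast.mp (hx ▸ Rat.den_dvd N L)

theorem Rat.eq_num_mul_div_den_of_mul_eq_intCast {x : ℚ} {L : ℕ} {N : ℤ} (h : x * L = N) :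
    N = x.num * (L / x.den : ℕ) := by
  have hL := Nat.mul_div_cancel' (den_dvd_of_mul_eq_intCast h)
  have : (N : ℚ) = x.num * (L / x.den : ℕ) := calc
    (N : ℚ) = x * L := h.symm
    _ = x * x.den * (L / x.den : ℕ) := by rw [mul_assoc, ← Nat.cast_mul, hL]
    _ = x.num * (L / x.den : ℕ) := by rw [Rat.mul_den_eq_num]
  exact Int.cast_injective (α := ℚ) (by push_cast; exact this)

theorem div_mul_add_div_mul_mul_eq {K : Type*} [Field K] (x y : K) {u v g : K} (hu : u ≠ 0)
    (hv : v ≠ 0) (hg : g ≠ 0) : (x / (u * g) + y / (v * g)) * (u * g * v) = x * v + y * u := by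
  field_simp

theorem IsCoprime.of_dvd_mul_add {R : Type*} [CommRing R] {m a b u v : R}
    (hm : m ∣ a * u + b * v) (hbu : IsCoprime b u) (hvu : IsCoprime v u) : IsCoprime m u :=
  ((hbu.mul_left hvu).add_mul_left_left a).of_isCoprime_of_dvd_left (by rwa [add_comm, mul_comm u])

theorem Nat.modEq_of_dvd_mul_add {m a a' u : ℕ} {c : ℤ} (hmu : IsCoprime (m : ℤ) u)
    (ha : (m : ℤ) ∣ a * u + c) (ha' : (m : ℤ) ∣ a' * u + c) : a ≡ a' [MOD m] :=
  Nat.modEq_iff_dvd.mpr <| hmu.dvd_of_dvd_mul_right <| by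
    simpa [sub_mul] using _root_.dvd_sub ha' ha

theorem Nat.card_le_div_of_forall_modEq {s : Finset ℕ} {m n v : ℕ} (hmn : m ∣ n)
    (hs : s ⊆ Icc 1 n) (hv : ∀ a ∈ s, a ≡ v [MOD m]) : #s ≤ n / m := by
  calc #s ≤ #(range (n / m)) := card_le_card_of_injOn (fun a ↦ (a - 1) / m) ?_ ?_
    _ = n / m := card_range _
  · intro a ha
    have := mem_Icc.mp (hs ha)
    simpa using Nat.div_lt_div_of_lt_of_dvd hmn (by omega)
  · intro a ha a' ha' h
    have h₁ := mem_Icc.mp (hs ha)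
    have h₂ := mem_Icc.mp (hs ha')
    have hmod : (a - 1) % m = (a' - 1) % m := Nat.ModEq.add_right_cancel' 1 <| by
      rw [Nat.sub_add_cancel h₁.1, Nat.sub_add_cancel h₂.1]
      exact (hv a ha).trans (hv a' ha').symm
    have : a - 1 = a' - 1 := by
      rw [← Nat.div_add_mod (a - 1) m, ← Nat.div_add_mod (a' - 1) m, hmod]
      exact congrArg (m * · + _) h
    omega

theorem card_filter_den_add_div_eq_mul_le {q' r' g : ℕ} (hcop : q'.Coprime r') (hr' : r' ≠ 0)
    (hg : g ≠ 0) {b : ℤ} (hb : IsCoprime b r') (d : ℕ) :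
    #{a ∈ Icc 1 (q' * g) | (((a : ℕ) : ℚ) / ↑(q' * g) + b / ↑(r' * g)).den = d} * r' ≤ d := by
  set S := {a ∈ Icc 1 (q' * g) | (((a : ℕ) : ℚ) / ↑(q' * g) + b / ↑(r' * g)).den = d}
  obtain hS | ⟨a₀, ha₀⟩ := S.eq_empty_or_nonempty
  · rw [hS, card_empty, zero_mul]
    exact Nat.zero_le d
  have hden : ∀ a ∈ S, ((a : ℚ) / ↑(q' * g) + b / ↑(r' * g)).den = d :=
    fun a ha ↦ (mem_filter.mp ha).2
  have hq : q' * g ≠ 0 := by have := mem_Icc.mp (mem_filter.mp ha₀).1; omega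
  have hx (a : ℕ) : ((a : ℚ) / ↑(q' * g) + b / ↑(r' * g)) * ↑(q' * g * r') =
      ((a * r' + b * q' : ℤ) : ℚ) := by
    push_cast
    exact div_mul_add_div_mul_mul_eq _ _ (by exact_mod_cast left_ne_zero_of_mul hq)
      (by exact_mod_cast hr') (by exact_mod_cast hg)
  have hdL : d ∣ q' * g * r' := hden a₀ ha₀ ▸ Rat.den_dvd_of_mul_eq_intCast (hx a₀)
  set m := q' * g * r' / d
  have hmN : ∀ a ∈ S, (m : ℤ) ∣ a * r' + b * q' := fun a ha ↦
    ⟨_, (hden a ha ▸ Rat.eq_num_mul_div_den_of_mul_eq_intCast (hx a)).trans (mul_comm _ _)⟩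
  have hmr' : IsCoprime (m : ℤ) r' :=
    IsCoprime.of_dvd_mul_add (hmN a₀ ha₀) hb (Nat.isCoprime_iff_coprime.mpr hcop)
  have hmq : m ∣ q' * g := by
    have : (m : ℤ) ∣ (q' * g : ℕ) * r' := by exact_mod_cast Nat.div_dvd_of_dvd hdL
    exact Int.natCast_dvd_natCast.mp (hmr'.dvd_of_dvd_mul_right this)
  have hm : 0 < m := Nat.pos_of_dvd_of_pos hmq (Nat.pos_of_ne_zero hq)
  have hcard : #S * m ≤ q' * g := (Nat.le_div_iff_mul_le hm).mp <|
    Nat.card_le_div_of_forall_modEq hmq (filter_subset _ _)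
      fun a ha ↦ Nat.modEq_of_dvd_mul_add hmr' (hmN a ha) (hmN a₀ ha₀)
  refine Nat.le_of_mul_le_mul_right ?_ hm
  calc #S * r' * m = #S * m * r' := by ring
    _ ≤ q' * g * r' := Nat.mul_le_mul_right r' hcard
    _ = d * m := (Nat.mul_div_cancel' hdL).symm

theorem denom_lem_general (q r : ℕ) (hr : Squarefree r)
    (b : ℤ) (hb : Int.gcd b (r : ℤ) = 1) (d : ℕ) :
    ((Finset.filter
        (fun a => Nat.gcd a q = 1 ∧ ((a : ℚ) / (q : ℚ) + (b : ℚ) / (r : ℚ)).den = d)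
        (Finset.Icc 1 q)).card : ℝ) ≤ (d : ℝ) * (Nat.gcd q r : ℝ) / (r : ℝ) := by
  obtain ⟨g, q', r', hg, hcop, rfl, rfl⟩ :=
    Nat.exists_coprime' (Nat.gcd_pos_of_pos_right q hr.ne_zero.bot_lt)
  have hr' : r' ≠ 0 := left_ne_zero_of_mul hr.ne_zero
  have hbr' : IsCoprime b r' :=
    (Int.isCoprime_iff_gcd_eq_one.mpr hb).of_isCoprime_of_dvd_right (by simp)
  have hsub := card_le_card <| monotone_filter_right (Icc 1 (q' * g))
    (p := fun a ↦ a.gcd (q' * g) = 1 ∧ ((a : ℚ) / ↑(q' * g) + b / ↑(r' * g)).den = d)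
    fun _ _ h ↦ h.2
  rw [Nat.gcd_mul_right, hcop, one_mul, Nat.cast_mul (α := ℝ),
    mul_div_mul_right _ _ (by positivity), le_div_iff₀ (by positivity)]
  exact_mod_cast (Nat.mul_le_mul_right r' hsub).trans
    (card_filter_den_add_div_eq_mul_le hcop hr' hg.ne' hbr' d)

/-- Lemma 8.10: for squarefree `q, r` and `b` coprime to `r`, the number of
`a ∈ (ℤ/qℤ)^*` with `denom(a/q + b/r) = d` is at most `d·(q,r)/r`. Here the denominator of
a rational `x` (mod 1) is the least positive integer `D` with `D·x ∈ ℤ`, i.e. `Rat.den`. -/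
theorem denom_lem (q r : ℕ) (hq : Squarefree q) (hr : Squarefree r)
    (b : ℤ) (hb : Int.gcd b (r : ℤ) = 1) (d : ℕ) (hd : 0 < d) :
    ((Finset.filter
        (fun a => Nat.gcd a q = 1 ∧ ((a : ℚ) / (q : ℚ) + (b : ℚ) / (r : ℚ)).den = d)
        (Finset.Icc 1 q)).card : ℝ) ≤ (d : ℝ) * (Nat.gcd q r : ℝ) / (r : ℝ) :=
  denom_lem_general q r hr b hb d
end

section
/- Let m₁, m₂ be distinct nonzero integers, let r be a positive integer, and let b be an integer coprime to r. Let q₁, q₂ be squarefree positive integers, and let P be a positive integer dividing lcm(q₁,q₂)·r. Then |Σ e(m₁a₁/q₁ + m₂a₂/q₂)| ≤ |m₁ · m₂ · (m₁ - m₂)| · τ(P)², where the sum is over pairs (a₁, a₂) with a₁ ∈ {1,...,q₁} coprime to q₁, a₂ ∈ {1,...,q₂} coprime to q₂, and a₁q₂r + a₂q₁r ≡ b·q₁q₂ (mod P·gcd(q₁,q₂)). -/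
/-!
Detect the congruence modulo `Q = P (q₁, q₂)` with additive characters. Writing
`D = [q₁, q₂] r / P`, so that `Q D = q₁ q₂ r`, the `k`-th twisted sum factors as
`c_{q₁}(m₁ + kD) c_{q₂}(m₂ + kD)` times a unimodular factor, where `c_q` is the Ramanujan sum,
and `|c_q(n)| = |μ(q/(n,q))| φ((n,q)) ≤ (n, q)` for squarefree `q`.

It remains to bound `∑_{k < Q} (m₁ + kD, q₁) (m₂ + kD, q₂)`. Expand `(n, q) = ∑_{d ∣ (n,q)} φ(d)`
and split each `dᵢ ∣ qᵢ` as `dᵢ = eᵢ sᵢ` with `eᵢ = (dᵢ, D)`. Then `sᵢ` is prime to `D` and divides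
`qᵢ ∣ [q₁, q₂] r = P D`, hence divides `P`; the admissible `k` lie in a single class modulo
`[s₁, s₂]`, and `(s₁, s₂) ∣ m₁ - m₂`. So the pair `(d₁, d₂)` contributes at most
`Q |m₁ - m₂| φ(e₁) φ(e₂)`, while `eᵢ ∣ mᵢ` and `sᵢ ∣ P` leave `∑ φ(eᵢ) ≤ |mᵢ| τ(P)`.
-/

noncomputable def e (θ : ℝ) : ℂ := Complex.exp (2 * Real.pi * Complex.I * θ)

open Finset ArithmeticFunction ArithmeticFunction.Moebius
open scoped Nat

lemma e_add (x y : ℝ) : e (x + y) = e x * e y := by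
  simp [e, mul_add, Complex.exp_add]

lemma norm_e (x : ℝ) : ‖e x‖ = 1 := by
  rw [e, show 2 * (Real.pi : ℂ) * Complex.I * x = ((2 * Real.pi * x : ℝ) : ℂ) * Complex.I by
    push_cast; ring]
  exact Complex.norm_exp_ofReal_mul_I _

lemma e_intCast_div (n : ℤ) (q : ℕ) :
    e (n / q) = Complex.exp (2 * Real.pi * Complex.I / q) ^ n := by
  rw [e, ← Complex.exp_int_mul]
  congr 1
  push_cast
  ring

lemma e_intCast_div_eq_one_iff {q : ℕ} (hq : q ≠ 0) (n : ℤ) : e (n / q) = 1 ↔ (q : ℤ) ∣ n := by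
  rw [e_intCast_div, (Complex.isPrimitiveRoot_exp q hq).zpow_eq_one_iff_dvd]

lemma sum_range_e_mul_div {q : ℕ} (hq : q ≠ 0) (n : ℤ) :
    ∑ k ∈ range q, e (k * n / q) = if (q : ℤ) ∣ n then (q : ℂ) else 0 := by
  have hζ := Complex.isPrimitiveRoot_exp q hq
  have hpow (k : ℕ) : e (k * n / q) = e (n / q) ^ k := by
    rw [show (k : ℝ) * n / q = ((n * k : ℤ) : ℝ) / q by push_cast; ring, e_intCast_div,
      e_intCast_div, zpow_mul, zpow_natCast]
  have hroot : e (n / q) ^ q = 1 := by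
    rw [e_intCast_div, ← zpow_natCast, ← zpow_mul, mul_comm n, zpow_mul, zpow_natCast,
      hζ.pow_eq_one, one_zpow]
  simp_rw [hpow]
  split_ifs with h
  · simp [(e_intCast_div_eq_one_iff hq n).2 h]
  · rw [geom_sum_eq (mt (e_intCast_div_eq_one_iff hq n).1 h), hroot, sub_self, zero_div]

lemma sum_Icc_one_eq_sum_range {M : Type*} [AddCommGroup M] {f : ℕ → M} {q : ℕ}
    (h : f q = f 0) : ∑ j ∈ Icc 1 q, f j = ∑ j ∈ range q, f j := by
  have := (sum_range_succ f q).symm.trans (sum_range_succ' f q)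
  rw [h, add_left_inj] at this
  rw [this, range_eq_Ico, sum_Ico_add' f 0 q 1, zero_add, Ico_add_one_right_eq_Icc]

lemma sum_Icc_e_mul_div {q : ℕ} (hq : q ≠ 0) (n : ℤ) :
    ∑ k ∈ Icc 1 q, e (k * n / q) = if (q : ℤ) ∣ n then (q : ℂ) else 0 := by
  rw [← sum_range_e_mul_div hq, sum_Icc_one_eq_sum_range]
  have hq' : (q : ℝ) ≠ 0 := by exact_mod_cast hq
  simpa [hq', e] using (e_intCast_div_eq_one_iff one_ne_zero n).2 (one_dvd n)

lemma divisors_gcd_eq_filter {q : ℕ} (hq : q ≠ 0) (a : ℕ) :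
    (Nat.gcd a q).divisors = {d ∈ q.divisors | d ∣ a} := by
  rw [← Nat.divisors_filter_dvd_of_dvd hq (Nat.gcd_dvd_right a q)]
  exact filter_congr fun d hd => by rw [Nat.dvd_gcd_iff, and_iff_left (Nat.dvd_of_mem_divisors hd)]

lemma sum_moebius_filter_dvd {q : ℕ} (hq : q ≠ 0) (a : ℕ) :
    ∑ d ∈ q.divisors with d ∣ a, μ d = if Nat.gcd a q = 1 then 1 else 0 := by
  rw [← divisors_gcd_eq_filter hq, ← coe_mul_zeta_apply, moebius_mul_coe_zeta, one_apply]

lemma sum_filter_gcd_eq_one_eq_sum_moebius {R : Type*} [CommRing R] (s : Finset ℕ) {q : ℕ}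
    (hq : q ≠ 0) (f : ℕ → R) :
    ∑ a ∈ s with Nat.gcd a q = 1, f a = ∑ d ∈ q.divisors, (μ d : R) * ∑ a ∈ s with d ∣ a, f a := by
  simp_rw [mul_sum, sum_filter]
  rw [sum_comm]
  refine sum_congr rfl fun a _ => ?_
  calc (if Nat.gcd a q = 1 then f a else 0)
      = ((if Nat.gcd a q = 1 then 1 else 0 : ℤ) : R) * f a := by split_ifs <;> simp
    _ = ∑ d ∈ q.divisors with d ∣ a, (μ d : R) * f a := by
      rw [← sum_moebius_filter_dvd hq, Int.cast_sum, sum_mul]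
    _ = _ := by rw [sum_filter]

lemma sum_Icc_filter_dvd {M : Type*} [AddCommMonoid M] {d q : ℕ} (hd : d ∣ q) (f : ℕ → M) :
    ∑ a ∈ Icc 1 q with d ∣ a, f a = ∑ j ∈ Icc 1 (q / d), f (d * j) := by
  obtain ⟨c, rfl⟩ := hd
  rcases Nat.eq_zero_or_pos d with rfl | hd
  · simp
  rw [Nat.mul_div_cancel_left c hd, ← sum_image fun x _ y _ h => Nat.eq_of_mul_eq_mul_left hd h]
  congr 1
  ext a
  simp only [mem_filter, mem_Icc, mem_image]
  constructor
  · rintro ⟨⟨ha1, ha2⟩, j, rfl⟩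
    exact ⟨j, ⟨Nat.pos_of_mul_pos_left ha1, Nat.le_of_mul_le_mul_left ha2 hd⟩, rfl⟩
  · rintro ⟨j, ⟨hj1, hj2⟩, rfl⟩
    exact ⟨⟨Nat.mul_pos hd hj1, Nat.mul_le_mul_left d hj2⟩, dvd_mul_right d j⟩

def reducedResidues (q : ℕ) : Finset ℕ := (Icc 1 q).filter (fun a => Nat.gcd a q = 1)

noncomputable def ramanujanSum (q : ℕ) (n : ℤ) : ℂ := ∑ a ∈ reducedResidues q, e (a * n / q)

lemma ramanujanSum_eq_sum_moebius {q : ℕ} (hq : q ≠ 0) (n : ℤ) :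
    ramanujanSum q n =
      ∑ d ∈ q.divisors, (μ d : ℂ) * if ((q / d : ℕ) : ℤ) ∣ n then ((q / d : ℕ) : ℂ) else 0 := by
  rw [ramanujanSum, reducedResidues, sum_filter_gcd_eq_one_eq_sum_moebius _ hq]
  refine sum_congr rfl fun d hd => ?_
  have hdq := Nat.dvd_of_mem_divisors hd
  have hd0 : d ≠ 0 := (Nat.pos_of_mem_divisors hd).ne'
  rw [sum_Icc_filter_dvd hdq, ← sum_Icc_e_mul_div (Nat.div_ne_zero_iff_of_dvd hdq |>.2 ⟨hq, hd0⟩)]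
  congr 1
  refine sum_congr rfl fun j _ => ?_
  rw [Nat.cast_div hdq (by exact_mod_cast hd0)]
  push_cast
  field_simp

lemma totient_eq_sum_moebius (n : ℕ) : (φ n : ℤ) = ∑ t ∈ n.divisors, μ (n / t) * t := by
  rcases Nat.eq_zero_or_pos n with rfl | hn
  · simp
  rw [← Nat.sum_divisorsAntidiagonal' (f := fun x y => (μ x : ℤ) * y)]
  refine ((sum_eq_iff_sum_mul_moebius_eq (f := fun n => (φ n : ℤ)) (g := fun n => (n : ℤ))).1
    (fun n _ => ?_) n hn).symm
  exact_mod_cast Nat.sum_totient n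

lemma moebius_div_eq_mul_of_squarefree {q g t : ℕ} (hq : Squarefree q) (hgq : g ∣ q) (htg : t ∣ g) :
    μ (q / t) = μ (q / g) * μ (g / t) := by
  have hg0 : 0 < g := Nat.pos_of_dvd_of_pos hgq (Nat.pos_of_ne_zero hq.ne_zero)
  have hcop : Nat.Coprime (q / g) g :=
    (Nat.squarefree_mul_iff.1 (by rwa [Nat.div_mul_cancel hgq])).1
  rw [← isMultiplicative_moebius.map_mul_of_coprime
    (hcop.coprime_dvd_right (Nat.div_dvd_of_dvd htg)), Nat.div_mul_div_comm hgq htg, mul_comm q g, Nat.mul_div_mul_left q t hg0]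

lemma sum_moebius_mul_ite_dvd_of_squarefree {q : ℕ} (hq : Squarefree q) (n : ℤ) :
    ∑ d ∈ q.divisors, (μ d : ℤ) * (if ((q / d : ℕ) : ℤ) ∣ n then ((q / d : ℕ) : ℤ) else 0) =
      μ (q / Nat.gcd n.natAbs q) * φ (Nat.gcd n.natAbs q) := by
  set g := Nat.gcd n.natAbs q
  have hgq : g ∣ q := Nat.gcd_dvd_right _ _
  calc ∑ d ∈ q.divisors, (μ d : ℤ) * (if ((q / d : ℕ) : ℤ) ∣ n then ((q / d : ℕ) : ℤ) else 0)
      = ∑ t ∈ q.divisors, μ (q / t) * (if (t : ℤ) ∣ n then (t : ℤ) else 0) := by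
        rw [← Nat.sum_div_divisors q]
        refine sum_congr rfl fun d hd => ?_
        rw [Nat.div_div_self (Nat.dvd_of_mem_divisors hd) hq.ne_zero]
    _ = ∑ t ∈ g.divisors, μ (q / t) * t := by
        rw [divisors_gcd_eq_filter hq.ne_zero, sum_filter]
        refine sum_congr rfl fun t _ => ?_
        simp only [Int.natCast_dvd]
        split_ifs <;> simp
    _ = μ (q / g) * ∑ t ∈ g.divisors, μ (g / t) * t := by
        rw [mul_sum]
        refine sum_congr rfl fun t ht => ?_
        rw [moebius_div_eq_mul_of_squarefree hq hgq (Nat.dvd_of_mem_divisors ht), mul_assoc]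
    _ = μ (q / g) * φ g := by rw [totient_eq_sum_moebius]

lemma ramanujanSum_eq_of_squarefree {q : ℕ} (hq : Squarefree q) (n : ℤ) :
    ramanujanSum q n = μ (q / Nat.gcd n.natAbs q) * φ (Nat.gcd n.natAbs q) := by
  rw [ramanujanSum_eq_sum_moebius hq.ne_zero]
  have h := congrArg (Int.cast : ℤ → ℂ) (sum_moebius_mul_ite_dvd_of_squarefree hq n)
  simpa only [Int.cast_sum, Int.cast_mul, Int.cast_natCast, apply_ite (Int.cast : ℤ → ℂ),
    Int.cast_zero] using h

lemma norm_ramanujanSum_le {q : ℕ} (hq : Squarefree q) (n : ℤ) :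
    ‖ramanujanSum q n‖ ≤ Nat.gcd n.natAbs q := by
  rw [ramanujanSum_eq_of_squarefree hq, norm_mul, Complex.norm_intCast, Complex.norm_natCast]
  calc |(μ (q / Nat.gcd n.natAbs q) : ℝ)| * φ (Nat.gcd n.natAbs q) ≤ φ (Nat.gcd n.natAbs q) :=
        mul_le_of_le_one_left (Nat.cast_nonneg _) (by exact_mod_cast abs_moebius_le_one)
    _ ≤ Nat.gcd n.natAbs q := by exact_mod_cast Nat.totient_le _

lemma gcd_natAbs_eq_sum_totient {q : ℕ} (hq : q ≠ 0) (n : ℤ) :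
    Nat.gcd n.natAbs q = ∑ d ∈ q.divisors.filter fun d : ℕ => (d : ℤ) ∣ n, φ d := by
  rw [← Nat.sum_totient (Nat.gcd n.natAbs q), divisors_gcd_eq_filter hq]
  simp only [Int.natCast_dvd]

lemma sum_gcd_mul_gcd_eq_sum_totient_mul_card {q₁ q₂ : ℕ} (hq₁ : q₁ ≠ 0) (hq₂ : q₂ ≠ 0)
    (Q D : ℕ) (m₁ m₂ : ℤ) :
    ∑ k ∈ range Q, Nat.gcd (m₁ + k * D).natAbs q₁ * Nat.gcd (m₂ + k * D).natAbs q₂ =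
      ∑ d ∈ q₁.divisors ×ˢ q₂.divisors, φ d.1 * φ d.2 *
        #((range Q).filter fun k : ℕ => (d.1 : ℤ) ∣ m₁ + k * D ∧ (d.2 : ℤ) ∣ m₂ + k * D) := by
  calc _ = ∑ k ∈ range Q, ∑ d ∈ q₁.divisors ×ˢ q₂.divisors,
        if (d.1 : ℤ) ∣ m₁ + k * D ∧ (d.2 : ℤ) ∣ m₂ + k * D then φ d.1 * φ d.2 else 0 := by
        refine sum_congr rfl fun k _ => ?_
        rw [gcd_natAbs_eq_sum_totient hq₁, gcd_natAbs_eq_sum_totient hq₂, sum_filter, sum_filter,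
          sum_mul_sum, ← sum_product']
        simp only [ite_zero_mul_ite_zero]
    _ = _ := by
        rw [sum_comm]
        refine sum_congr rfl fun d _ => ?_
        rw [← sum_filter, sum_const, smul_eq_mul, mul_comm]

lemma card_le_div_of_modEq {K : Finset ℕ} {Q M : ℕ} (hMQ : M ∣ Q) (hK : K ⊆ range Q)
    (hmod : ∀ k ∈ K, ∀ k' ∈ K, k ≡ k' [MOD M]) : #K ≤ Q / M := by
  simpa using card_le_card_of_injOn (· / M) (t := range (Q / M))
    (fun k hk => mem_range.2 (Nat.div_lt_div_of_lt_of_dvd hMQ (mem_range.1 (hK hk))))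
    (fun k hk k' hk' h => by
      rw [← Nat.div_add_mod k M, ← Nat.div_add_mod k' M, show k / M = k' / M from h,
        hmod k hk k' hk'])

lemma modEq_of_dvd_add_mul {s D : ℕ} (hs : Nat.Coprime s D) {m k k' : ℤ}
    (h : (s : ℤ) ∣ m + k * D) (h' : (s : ℤ) ∣ m + k' * D) : k ≡ k' [ZMOD s] := by
  rw [Int.modEq_iff_dvd]
  have := dvd_sub h' h
  rw [add_sub_add_left_eq_sub, ← sub_mul] at this
  exact (Nat.isCoprime_iff_coprime.2 hs).dvd_of_dvd_mul_right this

lemma gcd_dvd_of_dvd_add_mul {d D : ℕ} {m k : ℤ} (h : (d : ℤ) ∣ m + k * D) :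
    (Nat.gcd d D : ℤ) ∣ m :=
  (dvd_add_left ((Int.natCast_dvd_natCast.2 (Nat.gcd_dvd_right d D)).mul_left k)).1
    ((Int.natCast_dvd_natCast.2 (Nat.gcd_dvd_left d D)).trans h)

lemma Squarefree.coprime_div_gcd {d : ℕ} (hd : Squarefree d) (D : ℕ) :
    Nat.Coprime (d / Nat.gcd d D) D := by
  rcases eq_or_ne D 0 with rfl | hD
  · simp [Nat.div_self (Nat.pos_of_ne_zero hd.ne_zero)]
  · exact Nat.coprime_div_gcd_of_squarefree hd hD

lemma Squarefree.div_gcd_dvd_of_dvd_mul {d P D : ℕ} (hd : Squarefree d) (hdPD : d ∣ P * D) :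
    d / Nat.gcd d D ∣ P :=
  (hd.coprime_div_gcd D).dvd_of_dvd_mul_right
    ((Nat.div_dvd_of_dvd (Nat.gcd_dvd_left d D)).trans hdPD)

lemma Squarefree.totient_eq_totient_gcd_mul {d : ℕ} (hd : Squarefree d) (D : ℕ) :
    φ d = φ (Nat.gcd d D) * φ (d / Nat.gcd d D) := by
  have hsplit : Nat.gcd d D * (d / Nat.gcd d D) = d := Nat.mul_div_cancel' (Nat.gcd_dvd_left d D)
  rw [← Nat.totient_mul (Nat.squarefree_mul_iff.1 (by rwa [hsplit])).1, hsplit]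

lemma totient_mul_totient_mul_card_le {d₁ d₂ P Q D : ℕ} {m₁ m₂ : ℤ}
    (hd₁ : Squarefree d₁) (hd₂ : Squarefree d₂) (h₁ : d₁ ∣ P * D) (h₂ : d₂ ∣ P * D)
    (hPQ : P ∣ Q) (hne : m₁ ≠ m₂) :
    φ d₁ * φ d₂ * #((range Q).filter fun k : ℕ => (d₁ : ℤ) ∣ m₁ + k * D ∧ (d₂ : ℤ) ∣ m₂ + k * D) ≤
      Q * (m₁ - m₂).natAbs * (φ (Nat.gcd d₁ D) * φ (Nat.gcd d₂ D)) := by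
  set K := (range Q).filter fun k : ℕ => (d₁ : ℤ) ∣ m₁ + k * D ∧ (d₂ : ℤ) ∣ m₂ + k * D
  rcases K.eq_empty_or_nonempty with hK | ⟨k₀, hk₀⟩
  · simp [hK]
  set s₁ := d₁ / Nat.gcd d₁ D
  set s₂ := d₂ / Nat.gcd d₂ D
  have hs₁d : s₁ ∣ d₁ := Nat.div_dvd_of_dvd (Nat.gcd_dvd_left _ _)
  have hs₂d : s₂ ∣ d₂ := Nat.div_dvd_of_dvd (Nat.gcd_dvd_left _ _)
  have hMQ : Nat.lcm s₁ s₂ ∣ Q :=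
    (Nat.lcm_dvd (hd₁.div_gcd_dvd_of_dvd_mul h₁) (hd₂.div_gcd_dvd_of_dvd_mul h₂)).trans hPQ
  have hcard : #K ≤ Q / Nat.lcm s₁ s₂ := by
    refine card_le_div_of_modEq hMQ (filter_subset _ _) fun k hk k' hk' => ?_
    simp only [K, mem_filter] at hk hk'
    exact Int.natCast_modEq_iff.1 (Int.modEq_and_modEq_iff_modEq_lcm.1
      ⟨modEq_of_dvd_add_mul (hd₁.coprime_div_gcd D) ((Int.natCast_dvd_natCast.2 hs₁d).trans hk.2.1)
          ((Int.natCast_dvd_natCast.2 hs₁d).trans hk'.2.1),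
        modEq_of_dvd_add_mul (hd₂.coprime_div_gcd D) ((Int.natCast_dvd_natCast.2 hs₂d).trans hk.2.2)
          ((Int.natCast_dvd_natCast.2 hs₂d).trans hk'.2.2)⟩)
  have hgcd : Nat.gcd s₁ s₂ ≤ (m₁ - m₂).natAbs := by
    simp only [K, mem_filter] at hk₀
    refine Nat.le_of_dvd (Int.natAbs_pos.2 (sub_ne_zero.2 hne)) (Int.natCast_dvd.1 ?_)
    have hg₁ : (Nat.gcd s₁ s₂ : ℤ) ∣ m₁ + k₀ * D :=
      (Int.natCast_dvd_natCast.2 ((Nat.gcd_dvd_left _ _).trans hs₁d)).trans hk₀.2.1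
    have hg₂ : (Nat.gcd s₁ s₂ : ℤ) ∣ m₂ + k₀ * D :=
      (Int.natCast_dvd_natCast.2 ((Nat.gcd_dvd_right _ _).trans hs₂d)).trans hk₀.2.2
    simpa using dvd_sub hg₁ hg₂
  calc φ d₁ * φ d₂ * #K
      ≤ φ (Nat.gcd d₁ D) * φ (Nat.gcd d₂ D) * (s₁ * s₂ * (Q / Nat.lcm s₁ s₂)) := by
        rw [hd₁.totient_eq_totient_gcd_mul D, hd₂.totient_eq_totient_gcd_mul D]
        calc _ = φ (Nat.gcd d₁ D) * φ (Nat.gcd d₂ D) * (φ s₁ * φ s₂ * #K) := by ring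
          _ ≤ _ := by gcongr <;> exact Nat.totient_le _
    _ = φ (Nat.gcd d₁ D) * φ (Nat.gcd d₂ D) * (Nat.gcd s₁ s₂ * Q) := by
        rw [← Nat.gcd_mul_lcm s₁ s₂, mul_assoc (Nat.gcd s₁ s₂), Nat.mul_div_cancel' hMQ]
    _ ≤ φ (Nat.gcd d₁ D) * φ (Nat.gcd d₂ D) * ((m₁ - m₂).natAbs * Q) := by gcongr
    _ = _ := by ring

lemma sum_totient_gcd_le {q P D : ℕ} (hq : Squarefree q) (hqPD : q ∣ P * D) (hP : P ≠ 0) {m : ℤ}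
    (hm : m ≠ 0) :
    ∑ d ∈ q.divisors with (Nat.gcd d D : ℤ) ∣ m, φ (Nat.gcd d D) ≤ m.natAbs * #P.divisors := by
  set S := {d ∈ q.divisors | (Nat.gcd d D : ℤ) ∣ m}
  let ι : ℕ → ℕ × ℕ := fun d => (Nat.gcd d D, d / Nat.gcd d D)
  have hinj : Set.InjOn ι S := fun d _ d' _ h => by
    simp only [ι, Prod.mk.injEq] at h
    rw [← Nat.mul_div_cancel' (Nat.gcd_dvd_left d D), h.2, h.1,
      Nat.mul_div_cancel' (Nat.gcd_dvd_left d' D)]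
  have hmaps : S.image ι ⊆ m.natAbs.divisors ×ˢ P.divisors := by
    simp only [subset_iff, mem_image, S, mem_filter, Nat.mem_divisors, mem_product]
    rintro _ ⟨d, ⟨⟨hdq, -⟩, hdm⟩, rfl⟩
    exact ⟨⟨Int.natCast_dvd.1 hdm, Int.natAbs_ne_zero.2 hm⟩,
      (hq.squarefree_of_dvd hdq).div_gcd_dvd_of_dvd_mul (hdq.trans hqPD), hP⟩
  calc ∑ d ∈ S, φ (Nat.gcd d D)
      = ∑ y ∈ S.image ι, φ y.1 := (sum_image (f := fun y => φ y.1) hinj).symm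
    _ ≤ ∑ y ∈ m.natAbs.divisors ×ˢ P.divisors, φ y.1 := sum_le_sum_of_subset hmaps
    _ = m.natAbs * #P.divisors := by
        rw [sum_product]
        simp only [sum_const, smul_eq_mul]
        rw [← mul_sum, Nat.sum_totient, mul_comm]

theorem sum_gcd_mul_gcd_le {q₁ q₂ P Q D : ℕ} {m₁ m₂ : ℤ} (hq₁ : Squarefree q₁)
    (hq₂ : Squarefree q₂) (h₁ : q₁ ∣ P * D) (h₂ : q₂ ∣ P * D) (hP : P ≠ 0) (hPQ : P ∣ Q)
    (hm₁ : m₁ ≠ 0) (hm₂ : m₂ ≠ 0) (hne : m₁ ≠ m₂) :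
    ∑ k ∈ range Q, Nat.gcd (m₁ + k * D).natAbs q₁ * Nat.gcd (m₂ + k * D).natAbs q₂ ≤
      Q * ((m₁ * m₂ * (m₁ - m₂)).natAbs * #P.divisors ^ 2) := by
  set S₁ := q₁.divisors.filter fun d => (Nat.gcd d D : ℤ) ∣ m₁
  set S₂ := q₂.divisors.filter fun d => (Nat.gcd d D : ℤ) ∣ m₂
  rw [sum_gcd_mul_gcd_eq_sum_totient_mul_card hq₁.ne_zero hq₂.ne_zero]
  calc _ = ∑ d ∈ S₁ ×ˢ S₂, φ d.1 * φ d.2 *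
        #((range Q).filter fun k : ℕ => (d.1 : ℤ) ∣ m₁ + k * D ∧ (d.2 : ℤ) ∣ m₂ + k * D) := by
        refine (sum_subset (product_subset_product (filter_subset _ _) (filter_subset _ _))
          fun d hd hdS => ?_).symm
        rw [card_eq_zero.2 (filter_eq_empty_iff.2 fun k _ hk => hdS ?_), mul_zero]
        exact mem_product.2 ⟨mem_filter.2 ⟨(mem_product.1 hd).1, gcd_dvd_of_dvd_add_mul hk.1⟩,
          mem_filter.2 ⟨(mem_product.1 hd).2, gcd_dvd_of_dvd_add_mul hk.2⟩⟩
    _ ≤ ∑ d ∈ S₁ ×ˢ S₂, Q * (m₁ - m₂).natAbs * (φ (Nat.gcd d.1 D) * φ (Nat.gcd d.2 D)) := by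
        refine sum_le_sum fun d hd => ?_
        have hd₁ := Nat.dvd_of_mem_divisors (mem_filter.1 (mem_product.1 hd).1).1
        have hd₂ := Nat.dvd_of_mem_divisors (mem_filter.1 (mem_product.1 hd).2).1
        exact totient_mul_totient_mul_card_le (hq₁.squarefree_of_dvd hd₁)
          (hq₂.squarefree_of_dvd hd₂) (hd₁.trans h₁) (hd₂.trans h₂) hPQ hne
    _ = Q * (m₁ - m₂).natAbs *
          ((∑ d ∈ S₁, φ (Nat.gcd d D)) * ∑ d ∈ S₂, φ (Nat.gcd d D)) := by
        rw [← mul_sum, sum_mul_sum, sum_product]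
    _ ≤ Q * (m₁ - m₂).natAbs * ((m₁.natAbs * #P.divisors) * (m₂.natAbs * #P.divisors)) := by
        gcongr
        · exact sum_totient_gcd_le hq₁ h₁ hP hm₁
        · exact sum_totient_gcd_le hq₂ h₂ hP hm₂
    _ = _ := by
        rw [Int.natAbs_mul, Int.natAbs_mul]
        ring

lemma sum_filter_dvd_eq_inv_mul_sum_e {α : Type*} (s : Finset α) (F : α → ℤ) (f : α → ℂ) {Q : ℕ}
    (hQ : Q ≠ 0) :
    ∑ a ∈ s with (Q : ℤ) ∣ F a, f a =
      (Q : ℂ)⁻¹ * ∑ k ∈ range Q, ∑ a ∈ s, e (k * F a / Q) * f a := by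
  rw [sum_comm, mul_sum, sum_filter]
  refine sum_congr rfl fun a _ => ?_
  rw [← sum_mul, sum_range_e_mul_div hQ]
  split_ifs
  · field_simp
  · simp

lemma norm_sum_reducedResidues_le {q₁ q₂ r Q D : ℕ} (hq₁ : Squarefree q₁) (hq₂ : Squarefree q₂)
    (hQ : Q ≠ 0) (hQD : Q * D = q₁ * q₂ * r) (m₁ m₂ b : ℤ) (k : ℕ) :
    ‖∑ a ∈ reducedResidues q₁ ×ˢ reducedResidues q₂,
        e (k * ((a.1 * q₂ * r + a.2 * q₁ * r - b * q₁ * q₂ : ℤ) : ℝ) / Q) *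
          e (m₁ * a.1 / q₁ + m₂ * a.2 / q₂)‖ ≤
      Nat.gcd (m₁ + k * D).natAbs q₁ * Nat.gcd (m₂ + k * D).natAbs q₂ := by
  have hphase (a : ℕ × ℕ) :
      e (k * ((a.1 * q₂ * r + a.2 * q₁ * r - b * q₁ * q₂ : ℤ) : ℝ) / Q) *
          e (m₁ * a.1 / q₁ + m₂ * a.2 / q₂) =
        e (a.1 * ((m₁ + k * D : ℤ) : ℝ) / q₁) * e (a.2 * ((m₂ + k * D : ℤ) : ℝ) / q₂) *
          e (-(k * b * q₁ * q₂) / Q) := by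
    simp only [← e_add]
    congr 1
    have hQD' : (Q : ℝ) * D = q₁ * q₂ * r := by exact_mod_cast hQD
    have : (q₁ : ℝ) ≠ 0 := by exact_mod_cast hq₁.ne_zero
    have : (q₂ : ℝ) ≠ 0 := by exact_mod_cast hq₂.ne_zero
    have : (Q : ℝ) ≠ 0 := by exact_mod_cast hQ
    field_simp
    push_cast
    linear_combination -(k * (a.1 * q₂ + a.2 * q₁)) * hQD'
  simp_rw [hphase, ← sum_mul, sum_product, ← sum_mul_sum]
  rw [norm_mul, norm_mul, norm_e, mul_one]
  exact mul_le_mul (norm_ramanujanSum_le hq₁ _) (norm_ramanujanSum_le hq₂ _) (norm_nonneg _)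
    (by positivity)

lemma filter_Icc_prod_Icc_eq_filter_dvd (q₁ q₂ r Q : ℕ) (b : ℤ) :
    (Icc 1 q₁ ×ˢ Icc 1 q₂).filter (fun a => Nat.gcd a.1 q₁ = 1 ∧ Nat.gcd a.2 q₂ = 1 ∧
        ((a.1 : ℤ) * q₂ * r + (a.2 : ℤ) * q₁ * r) % (Q : ℤ) = (b * q₁ * q₂) % (Q : ℤ)) =
      (reducedResidues q₁ ×ˢ reducedResidues q₂).filter
        (fun a => (Q : ℤ) ∣ a.1 * q₂ * r + a.2 * q₁ * r - b * q₁ * q₂) := by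
  ext a
  simp only [reducedResidues, mem_filter, mem_product, Int.emod_eq_emod_iff_emod_sub_eq_zero,
    Int.dvd_iff_emod_eq_zero]
  tauto

theorem key_lemma_r1_general (m₁ m₂ : ℤ) (hm₁ : m₁ ≠ 0) (hm₂ : m₂ ≠ 0) (hne : m₁ ≠ m₂)
    (r : ℕ) (b : ℤ)
    (q₁ q₂ : ℕ) (hq₁ : Squarefree q₁) (hq₂ : Squarefree q₂)
    (P : ℕ) (hP : 0 < P) (hPdvd : P ∣ Nat.lcm q₁ q₂ * r) :
    ‖(∑ a ∈ (Finset.Icc 1 q₁ ×ˢ Finset.Icc 1 q₂).filter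
          (fun a => Nat.gcd a.1 q₁ = 1 ∧ Nat.gcd a.2 q₂ = 1 ∧
            ((a.1 : ℤ) * q₂ * r + (a.2 : ℤ) * q₁ * r) % ((P * Nat.gcd q₁ q₂ : ℕ) : ℤ) =
              (b * q₁ * q₂) % ((P * Nat.gcd q₁ q₂ : ℕ) : ℤ)),
        e ((m₁ : ℝ) * (a.1 : ℝ) / q₁ + (m₂ : ℝ) * (a.2 : ℝ) / q₂))‖ ≤
      ((m₁ * m₂ * (m₁ - m₂)).natAbs : ℝ) * (P.divisors.card : ℝ) ^ 2 := by
  obtain ⟨D, hD⟩ := hPdvd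
  set Q := P * Nat.gcd q₁ q₂
  have hQ : Q ≠ 0 := mul_ne_zero hP.ne' (Nat.gcd_ne_zero_left hq₁.ne_zero)
  have hQD : Q * D = q₁ * q₂ * r := by
    rw [mul_right_comm, mul_comm, ← hD, ← mul_assoc, Nat.gcd_mul_lcm]
  have hcount := sum_gcd_mul_gcd_le (Q := Q) hq₁ hq₂ (hD ▸ (Nat.dvd_lcm_left q₁ q₂).mul_right r)
    (hD ▸ (Nat.dvd_lcm_right q₁ q₂).mul_right r) hP.ne' (dvd_mul_right P _) hm₁ hm₂ hne
  rw [filter_Icc_prod_Icc_eq_filter_dvd, sum_filter_dvd_eq_inv_mul_sum_e _ _ _ hQ, norm_mul,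
    norm_inv, Complex.norm_natCast]
  calc (Q : ℝ)⁻¹ * ‖∑ k ∈ range Q, ∑ a ∈ reducedResidues q₁ ×ˢ reducedResidues q₂, _‖
      ≤ (Q : ℝ)⁻¹ * ∑ k ∈ range Q,
          (Nat.gcd (m₁ + k * D).natAbs q₁ : ℝ) * Nat.gcd (m₂ + k * D).natAbs q₂ := by
        gcongr
        exact (norm_sum_le _ _).trans (sum_le_sum fun k _ =>
          norm_sum_reducedResidues_le hq₁ hq₂ hQ hQD m₁ m₂ b k)
    _ ≤ (Q : ℝ)⁻¹ * (Q * ((m₁ * m₂ * (m₁ - m₂)).natAbs * #P.divisors ^ 2 : ℕ)) := by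
        gcongr
        exact_mod_cast hcount
    _ = _ := by
        push_cast
        field_simp

/-- Lemma 9.2: for distinct nonzero integers `m₁, m₂`, `b` coprime to `r`, squarefree
`q₁, q₂`, and `P ∣ lcm(q₁,q₂)·r`, the exponential sum over pairs `(a₁, a₂)` of reduced
residues satisfying `a₁q₂r + a₂q₁r ≡ bq₁q₂ (mod P·(q₁,q₂))` is at most
`|m₁ m₂ (m₁ - m₂)| · τ(P)²`. -/
theorem key_lemma_r1 (m₁ m₂ : ℤ) (hm₁ : m₁ ≠ 0) (hm₂ : m₂ ≠ 0) (hne : m₁ ≠ m₂)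
    (r : ℕ) (hr : 0 < r) (b : ℤ) (hb : Int.gcd b (r : ℤ) = 1)
    (q₁ q₂ : ℕ) (hq₁ : Squarefree q₁) (hq₂ : Squarefree q₂)
    (P : ℕ) (hP : 0 < P) (hPdvd : P ∣ Nat.lcm q₁ q₂ * r) :
    ‖(∑ a ∈ (Finset.Icc 1 q₁ ×ˢ Finset.Icc 1 q₂).filter
          (fun a => Nat.gcd a.1 q₁ = 1 ∧ Nat.gcd a.2 q₂ = 1 ∧
            ((a.1 : ℤ) * q₂ * r + (a.2 : ℤ) * q₁ * r) % ((P * Nat.gcd q₁ q₂ : ℕ) : ℤ) =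
              (b * q₁ * q₂) % ((P * Nat.gcd q₁ q₂ : ℕ) : ℤ)),
        e ((m₁ : ℝ) * (a.1 : ℝ) / q₁ + (m₂ : ℝ) * (a.2 : ℝ) / q₂))‖ ≤
      ((m₁ * m₂ * (m₁ - m₂)).natAbs : ℝ) * (P.divisors.card : ℝ) ^ 2 :=
  key_lemma_r1_general m₁ m₂ hm₁ hm₂ hne r b q₁ q₂ hq₁ hq₂ P hP hPdvd
end

section
/- For every real B ≥ 0 and every ε > 0 there is a constant C = C(B, ε) such that for all real X ≥ 1 and all positive integers r: Σ (τ(q₁)^B/q₁) · (τ(q₂)^B/q₂) · (τ(q₃)^B/q₃) ≤ C · r^ε · X^{ε-1}, where the sum is over all triples (q₁, q₂, q₃) of squarefree positive integers with max(q₁, q₂, q₃) ≥ X, q₁ | r·q₂·q₃, q₂ | r·q₁·q₃, and q₃ | r·q₁·q₂. -/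
/-!
Split each admissible triple along the Venn diagram of its prime sets:
`q₁ = a₁e₁₂e₁₃f`, `q₂ = a₂e₁₂e₂₃f`, `q₃ = a₃e₁₃e₂₃f`, where `aᵢ` collects the primes of `qᵢ`
alone, `eᵢⱼ` those of exactly `qᵢ` and `qⱼ`, and `f` those of all three. The divisibility
conditions force `aᵢ ∣ r`. Since some `qᵢ ≥ X`, the sum is at most `X^(3η-1)` times three copies
of the sum weighted by `q₁^(1-3η)`. With `τ(q)^B ≪ q^η`, a weighted term is
`≪ q₁^(-2η) (q₂q₃)^(η-1) ≤ (e₁₂e₁₃e₂₃f)^(-1-η)`, so summing over the seven parameters gives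
`≪ τ(r)³ ζ(1+η)⁴ ≪ r^ε`.
-/

open scoped ENNReal NNReal
open Finset

theorem exists_succ_le_mul_two_rpow {κ : ℝ} (hκ : 0 < κ) :
    ∃ M : ℝ, 1 ≤ M ∧ ∀ a : ℕ, (a + 1 : ℝ) ≤ M * 2 ^ (a * κ) := by
  set c := (2 : ℝ) ^ κ - 1
  have hc : 0 < c := by linarith [Real.one_lt_rpow one_lt_two hκ]
  refine ⟨max 1 c⁻¹, le_max_left _ _, fun a => ?_⟩
  have hMc : 1 ≤ max 1 c⁻¹ * c := by
    calc 1 = c⁻¹ * c := (inv_mul_cancel₀ hc.ne').symm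
      _ ≤ max 1 c⁻¹ * c := by gcongr; exact le_max_right _ _
  calc (a + 1 : ℝ) ≤ max 1 c⁻¹ * (1 + a * c) := by
        nlinarith [le_max_left 1 c⁻¹, (Nat.cast_nonneg a : (0 : ℝ) ≤ a)]
    _ ≤ max 1 c⁻¹ * (1 + c) ^ a := by gcongr; exact one_add_mul_le_pow (by linarith) a
    _ = max 1 c⁻¹ * 2 ^ (a * κ) := by
        rw [mul_comm (a : ℝ), Real.rpow_mul zero_le_two, Real.rpow_natCast, add_sub_cancel]

theorem succ_le_rpow_of_two_le_rpow {κ x : ℝ} (hx : 0 ≤ x) (h : 2 ≤ x ^ κ) (a : ℕ) :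
    (a + 1 : ℝ) ≤ x ^ (a * κ) :=
  calc (a + 1 : ℝ) ≤ 2 ^ a := by exact_mod_cast Nat.lt_two_pow_self
    _ ≤ (x ^ κ) ^ a := pow_le_pow_left₀ zero_le_two h a
    _ = x ^ (a * κ) := by rw [mul_comm, Real.rpow_mul hx, Real.rpow_natCast]

theorem Nat.cast_rpow_eq_prod_primeFactors {n : ℕ} (hn : n ≠ 0) (κ : ℝ) :
    (n : ℝ) ^ κ = ∏ p ∈ n.primeFactors, (p : ℝ) ^ (n.factorization p * κ) := by
  conv_lhs => rw [← Nat.prod_factorization_pow_eq_self hn]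
  rw [Finsupp.prod, Nat.support_factorization, Nat.cast_prod,
    ← Real.finsetProd_rpow _ _ fun _ _ => by positivity]
  refine prod_congr rfl fun p _ => ?_
  rw [Nat.cast_pow, ← Real.rpow_natCast, ← Real.rpow_mul (Nat.cast_nonneg p)]

theorem card_divisors_le_mul_rpow {κ : ℝ} (hκ : 0 < κ) :
    ∃ C : ℝ, 0 < C ∧ ∀ n : ℕ, n ≠ 0 → (#n.divisors : ℝ) ≤ C * (n : ℝ) ^ κ := by
  obtain ⟨M, hM, hsucc⟩ := exists_succ_le_mul_two_rpow hκ
  set P := ⌈(2 : ℝ) ^ κ⁻¹⌉₊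
  have hlocal : ∀ p a : ℕ, p.Prime →
      (a + 1 : ℝ) ≤ (if p < P then M else 1) * (p : ℝ) ^ (a * κ) := by
    intro p a hp
    have hp2 : (2 : ℝ) ≤ p := by exact_mod_cast hp.two_le
    split_ifs with hpP
    · exact (hsucc a).trans (by gcongr)
    · rw [one_mul]
      refine succ_le_rpow_of_two_le_rpow (by positivity) ?_ a
      calc (2 : ℝ) = ((2 : ℝ) ^ κ⁻¹) ^ κ := by
            rw [← Real.rpow_mul zero_le_two, inv_mul_cancel₀ hκ.ne', Real.rpow_one]
        _ ≤ (p : ℝ) ^ κ := by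
            gcongr
            exact (Nat.le_ceil _).trans (by exact_mod_cast not_lt.mp hpP)
  -- Primes `p ≥ P` have `p^κ ≥ 2`, so their local factor is at most 1; the fewer than `P`
  -- smaller primes contribute at most `M` each.
  refine ⟨M ^ P, by positivity, fun n hn => ?_⟩
  have hsmall : ∏ p ∈ n.primeFactors, (if p < P then M else 1) ≤ M ^ P := by
    rw [← prod_filter, prod_const]
    refine pow_le_pow_right₀ hM ((card_le_card fun p hp => ?_).trans (card_range P).le)
    simpa using (mem_filter.mp hp).2
  calc (#n.divisors : ℝ) = ∏ p ∈ n.primeFactors, ((n.factorization p : ℝ) + 1) := by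
        rw [Nat.card_divisors hn]; push_cast; rfl
    _ ≤ ∏ p ∈ n.primeFactors,
          (if p < P then M else 1) * (p : ℝ) ^ (n.factorization p * κ) :=
        prod_le_prod (fun _ _ => by positivity)
          fun p hp => hlocal p _ (Nat.prime_of_mem_primeFactors hp)
    _ ≤ M ^ P * (n : ℝ) ^ κ := by
        rw [prod_mul_distrib, ← Nat.cast_rpow_eq_prod_primeFactors hn]
        gcongr

theorem card_divisors_rpow_le_mul_rpow {B κ : ℝ} (hB : 0 ≤ B) (hκ : 0 < κ) :
    ∃ C : ℝ≥0, ∀ n : ℕ, n ≠ 0 → (#n.divisors : ℝ≥0∞) ^ B ≤ C * (n : ℝ≥0∞) ^ κ := by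
  obtain ⟨C, hC, hτ⟩ := card_divisors_le_mul_rpow (κ := κ / (B + 1)) (by positivity)
  refine ⟨(C ^ B).toNNReal, fun n hn => ?_⟩
  have hn1 : (1 : ℝ) ≤ n := by exact_mod_cast Nat.one_le_iff_ne_zero.mpr hn
  have hreal : (#n.divisors : ℝ) ^ B ≤ C ^ B * (n : ℝ) ^ κ :=
    calc (#n.divisors : ℝ) ^ B ≤ (C * (n : ℝ) ^ (κ / (B + 1))) ^ B := by gcongr; exact hτ n hn
      _ = C ^ B * (n : ℝ) ^ (κ / (B + 1) * B) := by
          rw [Real.mul_rpow hC.le (by positivity), Real.rpow_mul (Nat.cast_nonneg n)]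
      _ ≤ C ^ B * (n : ℝ) ^ κ := by
          gcongr
          rw [div_mul_eq_mul_div, div_le_iff₀ (by positivity)]; nlinarith
  calc (#n.divisors : ℝ≥0∞) ^ B = ENNReal.ofReal ((#n.divisors : ℝ) ^ B) := by
        rw [← ENNReal.ofReal_natCast, ENNReal.ofReal_rpow_of_nonneg (Nat.cast_nonneg _) hB]
    _ ≤ ENNReal.ofReal (C ^ B * (n : ℝ) ^ κ) := ENNReal.ofReal_le_ofReal hreal
    _ = _ := by
        rw [ENNReal.ofReal_mul (by positivity),
          ← ENNReal.ofReal_rpow_of_pos (x := (n : ℝ)) (by positivity), ENNReal.ofReal_natCast]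
        rfl

theorem card_divisors_rpow_div_le {B η : ℝ} (hB : 0 ≤ B) (hη : 0 < η) :
    ∃ c : ℝ≥0, ∀ n : ℕ, n ≠ 0 →
      (#n.divisors : ℝ≥0∞) ^ B / n ≤ c * (n : ℝ≥0∞) ^ (η - 1) := by
  obtain ⟨c, hc⟩ := card_divisors_rpow_le_mul_rpow hB hη
  refine ⟨c, fun n hn => ?_⟩
  calc (#n.divisors : ℝ≥0∞) ^ B / n ≤ c * (n : ℝ≥0∞) ^ η / n := ENNReal.div_le_div_right (hc n hn) _
    _ = c * (n : ℝ≥0∞) ^ (η - 1) := by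
        rw [mul_div_assoc, sub_eq_add_neg, ENNReal.rpow_add _ _ (Nat.cast_ne_zero.mpr hn)
          (ENNReal.natCast_ne_top n), ENNReal.rpow_neg_one, div_eq_mul_inv]

theorem ENNReal.tsum_le_tsum_of_exists_preimage {α β : Type*} {f : α → ℝ≥0∞} {g : β → ℝ≥0∞}
    (m : β → α) (h : ∀ a, f a ≠ 0 → ∃ b, m b = a ∧ f a ≤ g b) : ∑' a, f a ≤ ∑' b, g b := by
  rw [← ENNReal.tsum_fiberwise g m]
  refine ENNReal.tsum_le_tsum fun a => ?_
  rcases eq_or_ne (f a) 0 with ha | ha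
  · simp [ha]
  obtain ⟨b, rfl, hb⟩ := h a ha
  exact hb.trans (ENNReal.le_tsum (⟨b, rfl⟩ : m ⁻¹' {m b}))

theorem ENNReal.tsum_prod_mul {α β : Type*} (f : α → ℝ≥0∞) (g : β → ℝ≥0∞) :
    ∑' x : α × β, f x.1 * g x.2 = (∑' a, f a) * ∑' b, g b := by
  simp only [ENNReal.tsum_prod', ENNReal.tsum_mul_left, ENNReal.tsum_mul_right]

theorem ENNReal.tsum_prod_mul_mul {α : Type*} (f : α → ℝ≥0∞) :
    ∑' x : α × α × α, f x.1 * f x.2.1 * f x.2.2 = (∑' a, f a) ^ 3 := by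
  simp only [mul_assoc]
  rw [ENNReal.tsum_prod_mul f fun y : α × α => f y.1 * f y.2, ENNReal.tsum_prod_mul]
  ring

theorem ENNReal.rpow_le_rpow_of_nonpos {x y : ℝ≥0∞} {z : ℝ} (h : x ≤ y) (hz : z ≤ 0) :
    y ^ z ≤ x ^ z := by
  have := ENNReal.inv_le_inv.mpr (ENNReal.rpow_le_rpow h (neg_nonneg.mpr hz))
  rwa [← ENNReal.rpow_neg, ← ENNReal.rpow_neg, neg_neg] at this

theorem ENNReal.rpow_mul_rpow_le_of_le_of_mul_sq_le {u v Q₁ Q₂ : ℝ≥0∞} {η : ℝ} (hu₀ : u ≠ 0)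
    (hu : u ≠ ⊤) (hv₁ : 1 ≤ v) (hv : v ≠ ⊤) (h₁ : u ≤ Q₁) (h₂ : u * v ^ 2 ≤ Q₂) (hη₀ : 0 ≤ η)
    (hη : η ≤ 1 / 3) : Q₁ ^ (-2 * η) * Q₂ ^ (η - 1) ≤ (u * v) ^ (-(1 + η)) :=
  calc Q₁ ^ (-2 * η) * Q₂ ^ (η - 1) ≤ u ^ (-2 * η) * (u * v ^ 2) ^ (η - 1) := by
        exact mul_le_mul' (ENNReal.rpow_le_rpow_of_nonpos h₁ (by linarith))
          (ENNReal.rpow_le_rpow_of_nonpos h₂ (by linarith))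
    _ = u ^ (-(1 + η)) * v ^ (2 * (η - 1)) := by
        rw [ENNReal.mul_rpow_of_ne_top hu (ENNReal.pow_ne_top hv), ← mul_assoc,
          ← ENNReal.rpow_add _ _ hu₀ hu, ← ENNReal.rpow_natCast, ← ENNReal.rpow_mul]
        ring_nf
    _ ≤ u ^ (-(1 + η)) * v ^ (-(1 + η)) := by
        gcongr
        linarith
    _ = (u * v) ^ (-(1 + η)) := (ENNReal.mul_rpow_of_ne_top hu hv _).symm

theorem Finset.prod_eq_mul_prod_venn {ι M : Type*} [CommMonoid M] [DecidableEq ι]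
    (s t u : Finset ι) (g : ι → M) :
    ∏ x ∈ s, g x = (∏ x ∈ (s \ t) \ u, g x) * (∏ x ∈ (s ∩ t) \ u, g x) *
      (∏ x ∈ (s ∩ u) \ t, g x) * ∏ x ∈ s ∩ t ∩ u, g x := by
  have h : (s \ t) ∩ u = (s ∩ u) \ t := by ext; simp only [mem_inter, mem_sdiff]; tauto
  rw [← prod_inter_mul_prod_sdiff s t, ← prod_inter_mul_prod_sdiff (s ∩ t) u,
    ← prod_inter_mul_prod_sdiff (s \ t) u, h]
  ac_rfl

theorem Nat.prod_primeFactors_sdiff_dvd {q m n r : ℕ} (hm : m ≠ 0) (hn : n ≠ 0)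
    (h : q ∣ r * m * n) : ∏ p ∈ (q.primeFactors \ m.primeFactors) \ n.primeFactors, p ∣ r := by
  refine prod_primes_dvd r (fun p hp => ?_) fun p hp => ?_
  · exact (Nat.prime_of_mem_primeFactors (mem_sdiff.mp (mem_sdiff.mp hp).1).1).prime
  obtain ⟨⟨hpq, hpm⟩, hpn⟩ := And.imp_left mem_sdiff.mp (mem_sdiff.mp hp)
  have hp := Nat.prime_of_mem_primeFactors hpq
  rcases hp.dvd_mul.mp ((Nat.dvd_of_mem_primeFactors hpq).trans h) with hpr | hpn'
  · rcases hp.dvd_mul.mp hpr with hpr | hpm'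
    · exact hpr
    · exact absurd (Nat.mem_primeFactors.mpr ⟨hp, hpm', hm⟩) hpm
  · exact absurd (Nat.mem_primeFactors.mpr ⟨hp, hpn', hn⟩) hpn

noncomputable def zetaTerm (s : ℝ) (n : ℕ) : ℝ≥0∞ := if n = 0 then 0 else (n : ℝ≥0∞) ^ (-s)

theorem zetaTerm_mul (s : ℝ) (m n : ℕ) : zetaTerm s (m * n) = zetaTerm s m * zetaTerm s n := by
  rcases eq_or_ne m 0 with rfl | hm
  · simp [zetaTerm]
  rcases eq_or_ne n 0 with rfl | hn
  · simp [zetaTerm]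
  simp only [zetaTerm, mul_ne_zero hm hn, hm, hn, if_false, Nat.cast_mul]
  exact ENNReal.mul_rpow_of_ne_top (ENNReal.natCast_ne_top m) (ENNReal.natCast_ne_top n) _

theorem tsum_zetaTerm_ne_top {s : ℝ} (hs : 1 < s) : ∑' n, zetaTerm s n ≠ ⊤ := by
  have h : ∀ n, zetaTerm s n = ENNReal.ofReal ((n : ℝ) ^ (-s)) := by
    intro n
    rcases eq_or_ne n 0 with rfl | hn
    · simp [zetaTerm, Real.zero_rpow (by linarith : -s ≠ 0)]
    · rw [zetaTerm, if_neg hn, ← ENNReal.ofReal_natCast, ENNReal.ofReal_rpow_of_pos (by positivity)]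
  rw [tsum_congr h, ← ENNReal.ofReal_tsum_of_nonneg (fun n => by positivity)
    (Real.summable_nat_rpow.mpr (by linarith))]
  exact ENNReal.ofReal_ne_top

theorem tsum_ite_dvd_eq_card_divisors {r : ℕ} (hr : r ≠ 0) :
    ∑' n : ℕ, (if n ∣ r then (1 : ℝ≥0∞) else 0) = #r.divisors := by
  rw [tsum_eq_sum (s := r.divisors) fun n hn => if_neg fun h => hn (Nat.mem_divisors.mpr ⟨h, hr⟩)]
  rw [sum_congr rfl fun n hn => if_pos (Nat.dvd_of_mem_divisors hn)]
  simp

def IsAdmissible (r : ℕ) (q : ℕ × ℕ × ℕ) : Prop :=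
  Squarefree q.1 ∧ Squarefree q.2.1 ∧ Squarefree q.2.2 ∧
    q.1 ∣ r * q.2.1 * q.2.2 ∧ q.2.1 ∣ r * q.1 * q.2.2 ∧ q.2.2 ∣ r * q.1 * q.2.1

instance (r : ℕ) : DecidablePred (IsAdmissible r) := fun _ => by
  unfold IsAdmissible; infer_instance

def vennMul (x : (ℕ × ℕ × ℕ) × (ℕ × ℕ × ℕ) × ℕ) : ℕ × ℕ × ℕ :=
  let ⟨⟨a₁, a₂, a₃⟩, ⟨e₁₂, e₁₃, e₂₃⟩, f⟩ := x
  (a₁ * e₁₂ * e₁₃ * f, a₂ * e₁₂ * e₂₃ * f, a₃ * e₁₃ * e₂₃ * f)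

namespace IsAdmissible

variable {r : ℕ} {q : ℕ × ℕ × ℕ}

theorem swap₁₂ (h : IsAdmissible r q) : IsAdmissible r (q.2.1, q.1, q.2.2) := by
  obtain ⟨h₁, h₂, h₃, d₁, d₂, d₃⟩ := h
  exact ⟨h₂, h₁, h₃, d₂, d₁, mul_right_comm r q.1 q.2.1 ▸ d₃⟩

theorem swap₁₃ (h : IsAdmissible r q) : IsAdmissible r (q.2.2, q.2.1, q.1) := by
  obtain ⟨h₁, h₂, h₃, d₁, d₂, d₃⟩ := h
  exact ⟨h₃, h₂, h₁, mul_right_comm r q.1 q.2.1 ▸ d₃, mul_right_comm r q.1 q.2.2 ▸ d₂,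
    mul_right_comm r q.2.1 q.2.2 ▸ d₁⟩

theorem swap₁₂_iff : IsAdmissible r (q.2.1, q.1, q.2.2) ↔ IsAdmissible r q :=
  ⟨swap₁₂, swap₁₂⟩

theorem swap₁₃_iff : IsAdmissible r (q.2.2, q.2.1, q.1) ↔ IsAdmissible r q :=
  ⟨swap₁₃, swap₁₃⟩

theorem exists_vennMul_eq (h : IsAdmissible r q) :
    ∃ a e f, a.1 ∣ r ∧ a.2.1 ∣ r ∧ a.2.2 ∣ r ∧ vennMul (a, e, f) = q := by
  obtain ⟨q₁, q₂, q₃⟩ := q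
  obtain ⟨h₁, h₂, h₃, d₁, d₂, d₃⟩ := h
  dsimp only at h₁ h₂ h₃ d₁ d₂ d₃
  set P₁ := q₁.primeFactors
  set P₂ := q₂.primeFactors
  set P₃ := q₃.primeFactors
  refine ⟨(∏ p ∈ (P₁ \ P₂) \ P₃, p, ∏ p ∈ (P₂ \ P₁) \ P₃, p, ∏ p ∈ (P₃ \ P₁) \ P₂, p),
    (∏ p ∈ (P₁ ∩ P₂) \ P₃, p, ∏ p ∈ (P₁ ∩ P₃) \ P₂, p, ∏ p ∈ (P₂ ∩ P₃) \ P₁, p),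
    ∏ p ∈ P₁ ∩ P₂ ∩ P₃, p,
    Nat.prod_primeFactors_sdiff_dvd h₂.ne_zero h₃.ne_zero d₁,
    Nat.prod_primeFactors_sdiff_dvd h₁.ne_zero h₃.ne_zero d₂,
    Nat.prod_primeFactors_sdiff_dvd h₁.ne_zero h₂.ne_zero d₃, ?_⟩
  simp only [vennMul, Prod.mk.injEq]
  refine ⟨?_, ?_, ?_⟩
  · rw [← prod_eq_mul_prod_venn]
    exact Nat.prod_primeFactors_of_squarefree h₁
  · rw [inter_comm P₁ P₂, ← prod_eq_mul_prod_venn]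
    exact Nat.prod_primeFactors_of_squarefree h₂
  · rw [inter_comm (P₁ ∩ P₂) P₃, ← inter_assoc, inter_comm P₁ P₃, inter_comm P₂ P₃,
      ← prod_eq_mul_prod_venn]
    exact Nat.prod_primeFactors_of_squarefree h₃

end IsAdmissible

theorem one_le_rpow_neg_mul_add {X : ℝ} (hX : 1 ≤ X) {δ : ℝ} (hδ : 0 ≤ δ) {q₁ q₂ q₃ : ℕ}
    (h : X ≤ max (q₁ : ℝ) (max (q₂ : ℝ) (q₃ : ℝ))) :
    1 ≤ ENNReal.ofReal X ^ (-δ) * ((q₁ : ℝ≥0∞) ^ δ + (q₂ : ℝ≥0∞) ^ δ + (q₃ : ℝ≥0∞) ^ δ) := by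
  have hX₀ : ENNReal.ofReal X ^ δ ≠ 0 :=
    (ENNReal.rpow_pos (ENNReal.ofReal_pos.mpr (by linarith)) ENNReal.ofReal_ne_top).ne'
  have hXq : ∀ q : ℕ, X ≤ q → ENNReal.ofReal X ^ δ ≤ (q : ℝ≥0∞) ^ δ := fun q hq =>
    ENNReal.rpow_le_rpow (by simpa using ENNReal.ofReal_le_ofReal hq) hδ
  have hmax : ENNReal.ofReal X ^ δ ≤ (q₁ : ℝ≥0∞) ^ δ + (q₂ : ℝ≥0∞) ^ δ + (q₃ : ℝ≥0∞) ^ δ := by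
    rcases le_max_iff.mp h with h | h
    · exact (hXq _ h).trans (le_add_right le_self_add)
    rcases le_max_iff.mp h with h | h
    · exact (hXq _ h).trans (le_add_right le_add_self)
    · exact (hXq _ h).trans le_add_self
  calc 1 = ENNReal.ofReal X ^ (-δ) * ENNReal.ofReal X ^ δ := by
        rw [ENNReal.rpow_neg,
          ENNReal.inv_mul_cancel hX₀ (ENNReal.rpow_ne_top_of_nonneg hδ ENNReal.ofReal_ne_top)]
    _ ≤ _ := by gcongr

section Weights

variable {w : ℕ → ℝ≥0∞} {c : ℝ≥0∞} {η : ℝ}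

theorem rpow_mul_weight_le_zetaTerm (hw : ∀ n, n ≠ 0 → w n ≤ c * (n : ℝ≥0∞) ^ (η - 1))
    (hη₀ : 0 ≤ η) (hη : η ≤ 1 / 3) {q₁ q₂ q₃ u v : ℕ} (hq₁ : q₁ ≠ 0) (hq₂ : q₂ ≠ 0) (hq₃ : q₃ ≠ 0)
    (hu : u ∣ q₁) (huv : u * v ^ 2 ∣ q₂ * q₃) :
    (q₁ : ℝ≥0∞) ^ (1 - 3 * η) * (w q₁ * w q₂ * w q₃) ≤ c ^ 3 * zetaTerm (1 + η) (u * v) := by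
  have hu₀ : u ≠ 0 := ne_zero_of_dvd_ne_zero hq₁ hu
  have hv₀ : v ≠ 0 := fun hv => by simp [hv, hq₂, hq₃] at huv
  calc (q₁ : ℝ≥0∞) ^ (1 - 3 * η) * (w q₁ * w q₂ * w q₃)
      ≤ (q₁ : ℝ≥0∞) ^ (1 - 3 * η) * ((c * (q₁ : ℝ≥0∞) ^ (η - 1)) *
          (c * (q₂ : ℝ≥0∞) ^ (η - 1)) * (c * (q₃ : ℝ≥0∞) ^ (η - 1))) := by
        gcongr <;> apply hw <;> assumption
    _ = c ^ 3 * ((q₁ : ℝ≥0∞) ^ (-2 * η) * ((q₂ : ℝ≥0∞) * q₃) ^ (η - 1)) := by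
        rw [ENNReal.mul_rpow_of_ne_top (ENNReal.natCast_ne_top _)
          (ENNReal.natCast_ne_top _), show -2 * η = (1 - 3 * η) + (η - 1) by ring,
          ENNReal.rpow_add _ _ (Nat.cast_ne_zero.mpr hq₁) (ENNReal.natCast_ne_top _)]
        ring
    _ ≤ c ^ 3 * zetaTerm (1 + η) (u * v) := by
        rw [zetaTerm, if_neg (mul_ne_zero hu₀ hv₀), Nat.cast_mul]
        gcongr
        refine ENNReal.rpow_mul_rpow_le_of_le_of_mul_sq_le (Nat.cast_ne_zero.mpr hu₀)
          (ENNReal.natCast_ne_top _) (Nat.one_le_cast.mpr (Nat.one_le_iff_ne_zero.mpr hv₀))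
          (ENNReal.natCast_ne_top _) ?_ ?_ hη₀ hη
        · exact_mod_cast Nat.le_of_dvd (Nat.pos_of_ne_zero hq₁) hu
        · exact_mod_cast Nat.le_of_dvd (Nat.pos_of_ne_zero (mul_ne_zero hq₂ hq₃)) huv

theorem tsum_admissible_rpow_mul_le (hw : ∀ n, n ≠ 0 → w n ≤ c * (n : ℝ≥0∞) ^ (η - 1))
    (hη₀ : 0 ≤ η) (hη : η ≤ 1 / 3) {r : ℕ} (hr : r ≠ 0) :
    ∑' q : ℕ × ℕ × ℕ, (if IsAdmissible r q then
        (q.1 : ℝ≥0∞) ^ (1 - 3 * η) * (w q.1 * w q.2.1 * w q.2.2) else 0) ≤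
      c ^ 3 * (#r.divisors : ℝ≥0∞) ^ 3 * (∑' n, zetaTerm (1 + η) n) ^ 4 := by
  set D : ℕ → ℝ≥0∞ := fun n => if n ∣ r then 1 else 0
  set Z := zetaTerm (1 + η)
  calc _ ≤ ∑' x : (ℕ × ℕ × ℕ) × (ℕ × ℕ × ℕ) × ℕ, c ^ 3 *
        ((D x.1.1 * D x.1.2.1 * D x.1.2.2) *
          ((Z x.2.1.1 * Z x.2.1.2.1 * Z x.2.1.2.2) * Z x.2.2)) := by
        refine ENNReal.tsum_le_tsum_of_exists_preimage vennMul fun q hq => ?_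
        have hadm : IsAdmissible r q := by by_contra h; simp [h] at hq
        obtain ⟨⟨a₁, a₂, a₃⟩, ⟨e₁₂, e₁₃, e₂₃⟩, f, ha₁, ha₂, ha₃, rfl⟩ := hadm.exists_vennMul_eq
        refine ⟨_, rfl, ?_⟩
        rw [if_pos hadm]
        obtain ⟨h₁, h₂, h₃, -⟩ := hadm
        dsimp only [vennMul] at h₁ h₂ h₃ ⊢
        simp only [D, if_pos ha₁, if_pos ha₂, if_pos ha₃, one_mul, Z, ← zetaTerm_mul]
        refine (rpow_mul_weight_le_zetaTerm hw hη₀ hη h₁.ne_zero h₂.ne_zero h₃.ne_zero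
          (u := e₁₂ * e₁₃) (v := e₂₃ * f) ⟨a₁ * f, by ring⟩ ⟨a₂ * a₃, by ring⟩).trans_eq ?_
        ring_nf
    _ = c ^ 3 * (#r.divisors : ℝ≥0∞) ^ 3 * (∑' n, Z n) ^ 4 := by
        rw [ENNReal.tsum_mul_left,
          ENNReal.tsum_prod_mul (fun a : ℕ × ℕ × ℕ => D a.1 * D a.2.1 * D a.2.2)
          (fun y : (ℕ × ℕ × ℕ) × ℕ => (Z y.1.1 * Z y.1.2.1 * Z y.1.2.2) * Z y.2),
          ENNReal.tsum_prod_mul (fun e : ℕ × ℕ × ℕ => Z e.1 * Z e.2.1 * Z e.2.2) Z,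
          ENNReal.tsum_prod_mul_mul, ENNReal.tsum_prod_mul_mul,
          tsum_ite_dvd_eq_card_divisors hr]
        ring

theorem tsum_admissible_of_le_max_le_rpow_neg_mul {δ : ℝ} (hδ : 0 ≤ δ) {X : ℝ} (hX : 1 ≤ X)
    (r : ℕ) :
    ∑' q : ℕ × ℕ × ℕ, (if IsAdmissible r q ∧ X ≤ max (q.1 : ℝ) (max (q.2.1 : ℝ) (q.2.2 : ℝ))
        then w q.1 * w q.2.1 * w q.2.2 else 0) ≤
      ENNReal.ofReal X ^ (-δ) * (3 * ∑' q : ℕ × ℕ × ℕ, if IsAdmissible r q then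
        (q.1 : ℝ≥0∞) ^ δ * (w q.1 * w q.2.1 * w q.2.2) else 0) := by
  set V : ℕ × ℕ × ℕ → ℝ≥0∞ := fun q => if IsAdmissible r q then w q.1 * w q.2.1 * w q.2.2 else 0
  have hV₁₂ : ∀ q : ℕ × ℕ × ℕ, V (q.2.1, q.1, q.2.2) = V q := fun q => by
    simp only [V, IsAdmissible.swap₁₂_iff]
    exact if_congr Iff.rfl (by ring) rfl
  have hV₁₃ : ∀ q : ℕ × ℕ × ℕ, V (q.2.2, q.2.1, q.1) = V q := fun q => by
    simp only [V, IsAdmissible.swap₁₃_iff]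
    exact if_congr Iff.rfl (by ring) rfl
  have h₁₂ : ∑' q : ℕ × ℕ × ℕ, (q.2.1 : ℝ≥0∞) ^ δ * V q =
      ∑' q : ℕ × ℕ × ℕ, (q.1 : ℝ≥0∞) ^ δ * V q := by
    rw [← (⟨fun q => (q.2.1, q.1, q.2.2), fun q => (q.2.1, q.1, q.2.2), fun _ => rfl,
      fun _ => rfl⟩ : ℕ × ℕ × ℕ ≃ ℕ × ℕ × ℕ).tsum_eq]
    simp [hV₁₂]
  have h₁₃ : ∑' q : ℕ × ℕ × ℕ, (q.2.2 : ℝ≥0∞) ^ δ * V q =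
      ∑' q : ℕ × ℕ × ℕ, (q.1 : ℝ≥0∞) ^ δ * V q := by
    rw [← (⟨fun q => (q.2.2, q.2.1, q.1), fun q => (q.2.2, q.2.1, q.1), fun _ => rfl,
      fun _ => rfl⟩ : ℕ × ℕ × ℕ ≃ ℕ × ℕ × ℕ).tsum_eq]
    simp [hV₁₃]
  calc _ ≤ ∑' q : ℕ × ℕ × ℕ, ENNReal.ofReal X ^ (-δ) *
        ((q.1 : ℝ≥0∞) ^ δ * V q + (q.2.1 : ℝ≥0∞) ^ δ * V q + (q.2.2 : ℝ≥0∞) ^ δ * V q) := by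
        refine ENNReal.tsum_le_tsum fun q => ?_
        split_ifs with h
        · rw [show V q = _ from if_pos h.1, ← add_mul, ← add_mul, ← mul_assoc]
          exact le_mul_of_one_le_left' (one_le_rpow_neg_mul_add hX hδ h.2)
        · exact zero_le
    _ = _ := by
        rw [ENNReal.tsum_mul_left, ENNReal.tsum_add, ENNReal.tsum_add, h₁₂, h₁₃]
        simp only [V, mul_ite, mul_zero]
        ring

theorem tsum_admissible_of_le_max_le (hw : ∀ n, n ≠ 0 → w n ≤ c * (n : ℝ≥0∞) ^ (η - 1))
    (hη₀ : 0 ≤ η) (hη : η ≤ 1 / 3) {X : ℝ} (hX : 1 ≤ X) {r : ℕ} (hr : r ≠ 0) :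
    ∑' q : ℕ × ℕ × ℕ, (if IsAdmissible r q ∧ X ≤ max (q.1 : ℝ) (max (q.2.1 : ℝ) (q.2.2 : ℝ))
        then w q.1 * w q.2.1 * w q.2.2 else 0) ≤
      3 * c ^ 3 * (#r.divisors : ℝ≥0∞) ^ 3 * (∑' n, zetaTerm (1 + η) n) ^ 4 *
        ENNReal.ofReal X ^ (3 * η - 1) :=
  calc _ ≤ ENNReal.ofReal X ^ (-(1 - 3 * η)) * (3 * ∑' q : ℕ × ℕ × ℕ, if IsAdmissible r q then
        (q.1 : ℝ≥0∞) ^ (1 - 3 * η) * (w q.1 * w q.2.1 * w q.2.2) else 0) :=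
        tsum_admissible_of_le_max_le_rpow_neg_mul (by linarith) hX r
    _ ≤ ENNReal.ofReal X ^ (-(1 - 3 * η)) *
          (3 * (c ^ 3 * (#r.divisors : ℝ≥0∞) ^ 3 * (∑' n, zetaTerm (1 + η) n) ^ 4)) := by
        gcongr
        exact tsum_admissible_rpow_mul_le hw hη₀ hη hr
    _ = _ := by rw [neg_sub]; ring

end Weights

/-- Lemma 9.4: for `B ≥ 0` and `ε > 0` there is `C` such that for all `X ≥ 1` and positive
integers `r`, the sum of `(τ(q₁)^B/q₁)(τ(q₂)^B/q₂)(τ(q₃)^B/q₃)` over all triples of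
squarefree positive integers with `max(q₁,q₂,q₃) ≥ X`, `q₁ ∣ rq₂q₃`, `q₂ ∣ rq₁q₃`,
`q₃ ∣ rq₁q₂` is at most `C · r^ε · X^(ε-1)`. (The sum, of nonnegative terms over an
infinite index set, is taken in `ℝ≥0∞`.) -/
theorem lem12 (B : ℝ) (hB : 0 ≤ B) (ε : ℝ) (hε : 0 < ε) :
    ∃ C : ℝ, 0 < C ∧ ∀ X : ℝ, 1 ≤ X → ∀ r : ℕ, 0 < r →
      (∑' t : ℕ × ℕ × ℕ,
        (if Squarefree t.1 ∧ Squarefree t.2.1 ∧ Squarefree t.2.2 ∧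
            X ≤ max (t.1 : ℝ) (max (t.2.1 : ℝ) (t.2.2 : ℝ)) ∧
            t.1 ∣ r * t.2.1 * t.2.2 ∧ t.2.1 ∣ r * t.1 * t.2.2 ∧ t.2.2 ∣ r * t.1 * t.2.1
        then ((t.1.divisors.card : ℝ≥0∞) ^ B / (t.1 : ℝ≥0∞)) *
              ((t.2.1.divisors.card : ℝ≥0∞) ^ B / (t.2.1 : ℝ≥0∞)) *
              ((t.2.2.divisors.card : ℝ≥0∞) ^ B / (t.2.2 : ℝ≥0∞))
        else 0)) ≤
      ENNReal.ofReal (C * (r : ℝ) ^ ε * X ^ (ε - 1)) := by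
  set η := min ε 1 / 4
  have hη₀ : 0 < η := by positivity
  have hη : η ≤ 1 / 3 := by have := min_le_right ε 1; simp only [η]; linarith
  have hηε : 3 * η ≤ ε := by have := min_le_left ε 1; simp only [η]; linarith
  obtain ⟨c, hc⟩ := card_divisors_rpow_div_le hB hη₀
  obtain ⟨K, hK⟩ := card_divisors_rpow_le_mul_rpow (B := 3) (by norm_num) hε
  set Z := ∑' n, zetaTerm (1 + η) n
  set M : ℝ≥0∞ := 3 * c ^ 3 * K * Z ^ 4
  have hZ : Z ≠ ⊤ := tsum_zetaTerm_ne_top (by linarith)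
  have hM : M ≠ ⊤ := by simp [M, hZ, ENNReal.mul_eq_top]
  refine ⟨M.toReal + 1, by positivity, fun X hX r hr => ?_⟩
  calc _ = ∑' q : ℕ × ℕ × ℕ, (if IsAdmissible r q ∧ X ≤ max (q.1 : ℝ) (max (q.2.1 : ℝ) (q.2.2 : ℝ))
        then (#q.1.divisors : ℝ≥0∞) ^ B / q.1 * ((#q.2.1.divisors : ℝ≥0∞) ^ B / q.2.1) *
          ((#q.2.2.divisors : ℝ≥0∞) ^ B / q.2.2) else 0) :=
        tsum_congr fun q => if_congr (by unfold IsAdmissible; tauto) rfl rfl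
    _ ≤ 3 * c ^ 3 * (#r.divisors : ℝ≥0∞) ^ 3 * Z ^ 4 * ENNReal.ofReal X ^ (3 * η - 1) :=
        tsum_admissible_of_le_max_le hc hη₀.le hη hX hr.ne'
    _ ≤ 3 * c ^ 3 * (K * (r : ℝ≥0∞) ^ ε) * Z ^ 4 * ENNReal.ofReal X ^ (ε - 1) := by
        gcongr
        · exact_mod_cast hK r hr.ne'
        · exact ENNReal.one_le_ofReal.mpr hX
    _ ≤ ENNReal.ofReal (M.toReal + 1) * (r : ℝ≥0∞) ^ ε * ENNReal.ofReal X ^ (ε - 1) := by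
        rw [show 3 * c ^ 3 * (K * (r : ℝ≥0∞) ^ ε) * Z ^ 4 = M * (r : ℝ≥0∞) ^ ε by ring]
        gcongr
        exact (ENNReal.le_ofReal_iff_toReal_le hM (by positivity)).mpr (by linarith)
    _ = ENNReal.ofReal ((M.toReal + 1) * (r : ℝ) ^ ε * X ^ (ε - 1)) := by
        rw [ENNReal.ofReal_mul (by positivity), ENNReal.ofReal_mul (by positivity),
          ← ENNReal.ofReal_rpow_of_pos (by positivity),
          ← ENNReal.ofReal_rpow_of_pos (by positivity), ENNReal.ofReal_natCast]
end

section
/- For all real σ, γ, θ with 0 ≤ σ ≤ 1/4: |Γ(1/2 - σ + iγ) · (1 + 2πiθ)^{-(1/2 - σ + iγ)}| ≤ 10 · (1 + θ²)^{σ/2} · Re(Γ(1/2) · (1 + 2πiθ)^{-1/2}). -/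
/-!
Since `|arg a| ≤ π/2` for `a = 1 + 2πiθ`, we have `|a^{-s}| ≤ |a|^{σ - 1/2} e^{π|γ|/2}` and
`Re(Γ(1/2) a^{-1/2}) ≥ √π |a|^{-1/2} cos(π/4)`, and `|a|^σ ≤ 2 (1 + θ²)^{σ/2}`; so it suffices
that `|Γ(s)| e^{π|Im s|/2} ≤ 4√2` for `1/4 ≤ x := Re s ≤ 1/2`.
Bounding the Beta integral by its absolute value gives `|Γ(s)| Γ(1-x) ≤ Γ(x) |Γ(1-s)|`, and with
the reflection formula for `Γ(s)Γ(1-s)` and `Γ(x)Γ(1-x)` this becomes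
`|Γ(s)|² |sin πs| ≤ Γ(x)² sin πx`. Finally `|sin πs| ≥ e^{π|Im s|}/2` because `cos² πx ≤ 1/2`,
and `Γ(x) ≤ 1/x` by convexity of `Γ` on `[1, 2]`.
-/

open scoped Real

theorem Real.Gamma_le_one_of_mem_Icc {x : ℝ} (hx : x ∈ Set.Icc 1 2) : Real.Gamma x ≤ 1 := by
  simpa [Real.Gamma_two] using
    Real.convexOn_Gamma.le_max_of_mem_Icc (by norm_num : (1 : ℝ) ∈ Set.Ioi 0)
      (by norm_num : (2 : ℝ) ∈ Set.Ioi 0) hx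

theorem Real.mul_Gamma_le_one {x : ℝ} (hx0 : 0 < x) (hx1 : x ≤ 1) : x * Real.Gamma x ≤ 1 := by
  rw [← Real.Gamma_add_one hx0.ne']
  exact Real.Gamma_le_one_of_mem_Icc ⟨by linarith, by linarith⟩

namespace Complex

theorem betaIntegral_ofReal (x y : ℝ) :
    betaIntegral x y = ↑(∫ t in (0 : ℝ)..1, t ^ (x - 1) * (1 - t) ^ (y - 1)) := by
  rw [betaIntegral, ← intervalIntegral.integral_ofReal]
  refine intervalIntegral.integral_congr fun t ht => ?_
  rw [Set.uIcc_of_le zero_le_one] at ht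
  push_cast [ofReal_cpow ht.1, ofReal_cpow (sub_nonneg.2 ht.2)]
  rfl

theorem norm_betaIntegral_le (u v : ℂ) : ‖betaIntegral u v‖ ≤ ‖betaIntegral u.re v.re‖ := by
  have hnonneg : 0 ≤ ∫ t in (0 : ℝ)..1, t ^ (u.re - 1) * (1 - t) ^ (v.re - 1) :=
    intervalIntegral.integral_nonneg zero_le_one fun t ht =>
      mul_nonneg (Real.rpow_nonneg ht.1 _) (Real.rpow_nonneg (sub_nonneg.2 ht.2) _)
  rw [betaIntegral_ofReal, norm_real, Real.norm_of_nonneg hnonneg]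
  refine (intervalIntegral.norm_integral_le_integral_norm zero_le_one).trans_eq ?_
  -- only a.e.: at `t = 1` the complex and real conventions for `0 ^ _` can disagree
  refine intervalIntegral.integral_congr_ae ?_
  filter_upwards [MeasureTheory.Measure.ae_ne MeasureTheory.volume 1] with t ht1 ht
  rw [Set.uIoc_of_le zero_le_one] at ht
  have h1t : 0 < 1 - t := sub_pos.2 (lt_of_le_of_ne ht.2 ht1)
  rw [norm_mul, norm_cpow_eq_rpow_re_of_pos ht.1, ← ofReal_one, ← ofReal_sub,
    norm_cpow_eq_rpow_re_of_pos h1t]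
  simp

theorem norm_Gamma_mul_Gamma_add_le {s : ℂ} (hs : 0 < s.re) {δ : ℝ} (hδ : 0 ≤ δ) :
    ‖Gamma s‖ * Real.Gamma (s.re + δ) ≤ Real.Gamma s.re * ‖Gamma (s + δ)‖ := by
  rcases hδ.eq_or_lt with rfl | hδ
  · simp [mul_comm]
  have hδ' : 0 < (δ : ℂ).re := by simpa using hδ
  have hsδ : 0 < s.re + δ := by linarith
  have hΓδ : 0 < Real.Gamma δ := Real.Gamma_pos_of_pos hδ
  have hB := congrArg norm (Gamma_mul_Gamma_eq_betaIntegral hs hδ')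
  have hBre := congrArg norm (Gamma_mul_Gamma_eq_betaIntegral (s := s.re) (by simpa) hδ')
  push_cast [← ofReal_add, Gamma_ofReal, norm_mul, norm_real,
    Real.norm_of_nonneg (Real.Gamma_pos_of_pos hs).le, Real.norm_of_nonneg hΓδ.le,
    Real.norm_of_nonneg (Real.Gamma_pos_of_pos hsδ).le] at hB hBre
  have hle := norm_betaIntegral_le s δ
  rw [ofReal_re] at hle
  refine le_of_mul_le_mul_right ?_ hΓδ
  calc ‖Gamma s‖ * Real.Gamma (s.re + δ) * Real.Gamma δ
      = ‖Gamma (s + δ)‖ * ‖betaIntegral s δ‖ * Real.Gamma (s.re + δ) := by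
        linear_combination Real.Gamma (s.re + δ) * hB
    _ ≤ ‖Gamma (s + δ)‖ * ‖betaIntegral s.re δ‖ * Real.Gamma (s.re + δ) := by gcongr
    _ = Real.Gamma s.re * ‖Gamma (s + δ)‖ * Real.Gamma δ := by
        linear_combination -‖Gamma (s + δ)‖ * hBre

theorem norm_sin_sq (z : ℂ) : ‖sin z‖ ^ 2 = Real.sin z.re ^ 2 + Real.sinh z.im ^ 2 := by
  rw [sin_eq, ← ofReal_sin, ← ofReal_cos, ← ofReal_cosh, ← ofReal_sinh, ← ofReal_mul,
    ← ofReal_mul, norm_add_mul_I, Real.sq_sqrt (by positivity)]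
  linear_combination Real.sin z.re ^ 2 * Real.cosh_sq_sub_sinh_sq z.im +
    Real.sinh z.im ^ 2 * Real.sin_sq_add_cos_sq z.re

theorem exp_abs_im_le_two_mul_norm_sin {z : ℂ} (h : Real.cos z.re ^ 2 ≤ 1 / 2) :
    Real.exp |z.im| ≤ 2 * ‖sin z‖ := by
  refine (pow_le_pow_iff_left₀ (Real.exp_pos _).le (by positivity) two_ne_zero).1 ?_
  have hsinh : Real.sinh z.im ^ 2 = Real.sinh |z.im| ^ 2 := by
    rw [← Real.abs_sinh, sq_abs]
  have hexp : Real.exp |z.im| * Real.exp (-|z.im|) = 1 := by rw [← Real.exp_add]; simp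
  rw [mul_pow, norm_sin_sq, hsinh, Real.sinh_eq]
  nlinarith [Real.sin_sq_add_cos_sq z.re, sq_nonneg (Real.exp (-|z.im|))]

theorem norm_Gamma_sq_mul_norm_sin_le {s : ℂ} (hs0 : 0 < s.re) (hs : s.re ≤ 1 / 2) :
    ‖Gamma s‖ ^ 2 * ‖sin (π * s)‖ ≤ Real.Gamma s.re ^ 2 * Real.sin (π * s.re) := by
  set x := s.re
  have hΓx : 0 < Real.Gamma x := Real.Gamma_pos_of_pos hs0
  have hsin : 0 < Real.sin (π * x) :=
    Real.sin_pos_of_pos_of_lt_pi (by positivity) (by nlinarith [Real.pi_pos])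
  have hS : 0 < ‖sin (π * s)‖ := by
    refine lt_of_pow_lt_pow_left₀ 2 (norm_nonneg _) ?_
    rw [zero_pow two_ne_zero, norm_sin_sq, re_ofReal_mul]
    positivity
  have hshift : ‖Gamma (s + ↑(1 - 2 * x))‖ = ‖Gamma (1 - s)‖ := by
    have : s + ↑(1 - 2 * x) = (starRingEnd ℂ) (1 - s) :=
      Complex.ext (by simp [x]; ring) (by simp)
    rw [this, Gamma_conj, norm_conj]
  have hcmp : ‖Gamma s‖ * Real.Gamma (1 - x) ≤ Real.Gamma x * ‖Gamma (1 - s)‖ := by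
    have := norm_Gamma_mul_Gamma_add_le hs0 (δ := 1 - 2 * x) (by linarith)
    rwa [hshift, show x + (1 - 2 * x) = 1 - x by ring] at this
  have hreal : Real.Gamma x * Real.Gamma (1 - x) * Real.sin (π * x) = π := by
    rw [Real.Gamma_mul_Gamma_one_sub, div_mul_cancel₀ _ hsin.ne']
  have hcomplex : ‖Gamma s‖ * ‖Gamma (1 - s)‖ * ‖sin (π * s)‖ = π := by
    rw [← norm_mul, Gamma_mul_Gamma_one_sub, norm_div, norm_real,
      Real.norm_of_nonneg Real.pi_pos.le, div_mul_cancel₀ _ hS.ne']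
  refine le_of_mul_le_mul_right ?_ Real.pi_pos
  calc ‖Gamma s‖ ^ 2 * ‖sin (π * s)‖ * π
      = (‖Gamma s‖ * Real.Gamma (1 - x)) *
          (‖Gamma s‖ * Real.Gamma x * ‖sin (π * s)‖ * Real.sin (π * x)) := by
        linear_combination -(‖Gamma s‖ ^ 2 * ‖sin (π * s)‖) * hreal
    _ ≤ (Real.Gamma x * ‖Gamma (1 - s)‖) *
          (‖Gamma s‖ * Real.Gamma x * ‖sin (π * s)‖ * Real.sin (π * x)) := by
        gcongr
    _ = Real.Gamma x ^ 2 * Real.sin (π * x) * π := by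
        linear_combination Real.Gamma x ^ 2 * Real.sin (π * x) * hcomplex

theorem norm_Gamma_mul_exp_le {s : ℂ} (h1 : 1 / 4 ≤ s.re) (h2 : s.re ≤ 1 / 2) :
    ‖Gamma s‖ * Real.exp (π * |s.im| / 2) ≤ 4 * √2 := by
  set x := s.re
  have hΓ0 : 0 < Real.Gamma x := Real.Gamma_pos_of_pos (by linarith)
  have hΓ : Real.Gamma x ≤ 4 := by
    nlinarith [Real.mul_Gamma_le_one (by linarith) (by linarith : x ≤ 1)]
  have hsin0 : 0 ≤ Real.sin (π * x) :=
    Real.sin_nonneg_of_nonneg_of_le_pi (by positivity) (by nlinarith [Real.pi_pos])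
  have hcos : Real.cos (π * x) ^ 2 ≤ 1 / 2 := by
    have hle : Real.cos (π * x) ≤ √2 / 2 := by
      rw [← Real.cos_pi_div_four]
      exact Real.cos_le_cos_of_nonneg_of_le_pi (by positivity) (by nlinarith [Real.pi_pos])
        (by nlinarith [Real.pi_pos])
    have hnonneg : 0 ≤ Real.cos (π * x) :=
      Real.cos_nonneg_of_mem_Icc ⟨by nlinarith [Real.pi_pos], by nlinarith [Real.pi_pos]⟩
    nlinarith [Real.sq_sqrt (show (0 : ℝ) ≤ 2 by norm_num)]
  have hsin := exp_abs_im_le_two_mul_norm_sin (z := π * s) (by rwa [re_ofReal_mul])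
  rw [im_ofReal_mul, abs_mul, abs_of_pos Real.pi_pos] at hsin
  have hΓsin := norm_Gamma_sq_mul_norm_sin_le (s := s) (by linarith) h2
  refine (pow_le_pow_iff_left₀ (by positivity) (by positivity) two_ne_zero).1 ?_
  have hexp : Real.exp (π * |s.im| / 2) ^ 2 = Real.exp (π * |s.im|) := by
    rw [← Real.exp_nat_mul]; ring_nf
  calc (‖Gamma s‖ * Real.exp (π * |s.im| / 2)) ^ 2
      = ‖Gamma s‖ ^ 2 * Real.exp (π * |s.im|) := by rw [mul_pow, hexp]
    _ ≤ ‖Gamma s‖ ^ 2 * (2 * ‖sin (π * s)‖) := by gcongr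
    _ ≤ 2 * (Real.Gamma x ^ 2 * Real.sin (π * x)) := by linarith
    _ ≤ 2 * (4 ^ 2 * 1) := by
        gcongr
        exact Real.sin_le_one _
    _ = (4 * √2) ^ 2 := by rw [mul_pow, Real.sq_sqrt zero_le_two]; norm_num

theorem norm_cpow_le_of_re_nonneg {a : ℂ} (ha : 0 ≤ a.re) (w : ℂ) :
    ‖a ^ w‖ ≤ ‖a‖ ^ w.re * Real.exp (π / 2 * |w.im|) := by
  calc ‖a ^ w‖ ≤ ‖a‖ ^ w.re / Real.exp (arg a * w.im) := norm_cpow_le a w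
    _ = ‖a‖ ^ w.re * Real.exp (-(arg a * w.im)) := by rw [Real.exp_neg, div_eq_mul_inv]
    _ ≤ ‖a‖ ^ w.re * Real.exp (π / 2 * |w.im|) := by
      gcongr
      calc -(arg a * w.im) ≤ |arg a| * |w.im| := by rw [← abs_mul]; exact neg_le_abs _
        _ ≤ π / 2 * |w.im| := by gcongr; exact abs_arg_le_pi_div_two_iff.2 ha

theorem le_re_cpow_of_re_nonneg {a : ℂ} (ha : 0 ≤ a.re) {y : ℝ} (hy : |y| ≤ 1 / 2) :
    ‖a‖ ^ y * (√2 / 2) ≤ (a ^ (y : ℂ)).re := by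
  rw [cpow_ofReal_re, ← Real.cos_pi_div_four, ← Real.cos_abs (arg a * y)]
  gcongr
  refine Real.cos_le_cos_of_nonneg_of_le_pi (abs_nonneg _) (by linarith [Real.pi_pos]) ?_
  calc |arg a * y| = |arg a| * |y| := abs_mul _ _
    _ ≤ π / 2 * (1 / 2) := by gcongr; exact abs_arg_le_pi_div_two_iff.2 ha
    _ = π / 4 := by ring

theorem norm_Gamma_mul_cpow_neg_le {s a : ℂ} (hs1 : 1 / 4 ≤ s.re) (hs2 : s.re ≤ 1 / 2)
    (ha : 0 ≤ a.re) : ‖Gamma s * a ^ (-s)‖ ≤ 4 * √2 * ‖a‖ ^ (-s.re) := by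
  have hpow := norm_cpow_le_of_re_nonneg ha (-s)
  rw [neg_re, neg_im, abs_neg] at hpow
  calc ‖Gamma s * a ^ (-s)‖ ≤ ‖Gamma s‖ * (‖a‖ ^ (-s.re) * Real.exp (π / 2 * |s.im|)) := by
        rw [norm_mul]; gcongr
    _ = ‖Gamma s‖ * Real.exp (π * |s.im| / 2) * ‖a‖ ^ (-s.re) := by ring_nf
    _ ≤ 4 * √2 * ‖a‖ ^ (-s.re) := by grw [norm_Gamma_mul_exp_le hs1 hs2]

theorem le_re_Gamma_one_half_mul_cpow {a : ℂ} (ha : 0 ≤ a.re) :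
    √π * (‖a‖ ^ (-(1 / 2) : ℝ) * (√2 / 2)) ≤ (Gamma (1 / 2) * a ^ (-(1 / 2) : ℂ)).re := by
  have hΓ : Gamma (1 / 2) = (√π : ℝ) := by
    rw [← Real.Gamma_one_half_eq, ← Gamma_ofReal]; push_cast; rfl
  have hre := le_re_cpow_of_re_nonneg ha (y := -(1 / 2)) (by norm_num [abs_of_pos])
  push_cast at hre
  rw [hΓ, re_ofReal_mul]
  gcongr

end Complex

theorem norm_one_add_two_pi_mul_I_rpow_le (θ : ℝ) {σ : ℝ} (h0 : 0 ≤ σ) (h1 : σ ≤ 1 / 4) :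
    ‖1 + 2 * (π : ℂ) * Complex.I * θ‖ ^ σ ≤ 2 * (1 + θ ^ 2) ^ (σ / 2) := by
  have hnorm : ‖1 + 2 * (π : ℂ) * Complex.I * θ‖ ≤ 16 * √(1 + θ ^ 2) := by
    rw [show 1 + 2 * (π : ℂ) * Complex.I * θ = (1 : ℝ) + (2 * π * θ : ℝ) * Complex.I by
        push_cast; ring,
      Complex.norm_add_mul_I, show (16 : ℝ) = √(16 ^ 2) by simp, ← Real.sqrt_mul (by positivity)]
    gcongr
    have hπ : π ^ 2 ≤ 16 := by nlinarith [Real.pi_le_four, Real.pi_pos]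
    nlinarith [mul_le_mul_of_nonneg_right hπ (sq_nonneg θ)]
  have h16 : (16 : ℝ) ^ σ ≤ 2 := calc
    (16 : ℝ) ^ σ ≤ 16 ^ (1 / 4 : ℝ) := Real.rpow_le_rpow_of_exponent_le (by norm_num) h1
    _ = 2 := by
      rw [show (16 : ℝ) = 2 ^ (4 : ℝ) by norm_num, ← Real.rpow_mul zero_le_two]; norm_num
  calc ‖1 + 2 * (π : ℂ) * Complex.I * θ‖ ^ σ ≤ (16 * √(1 + θ ^ 2)) ^ σ := by gcongr
    _ = 16 ^ σ * (1 + θ ^ 2) ^ (σ / 2) := by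
      rw [Real.mul_rpow (by norm_num) (by positivity), Real.sqrt_eq_rpow,
        ← Real.rpow_mul (by positivity)]
      ring_nf
    _ ≤ 2 * (1 + θ ^ 2) ^ (σ / 2) := by gcongr

/-- Lemma 12.5, first bound: for `0 ≤ σ ≤ 1/4` and all real `γ, θ`,
`|Γ(1/2 - σ + iγ)(1 + 2πiθ)^{-(1/2 - σ + iγ)}| ≤ 10 (1 + θ²)^{σ/2} Re(Γ(1/2)(1 + 2πiθ)^{-1/2})`. -/
theorem gamma_compare (σ γ θ : ℝ) (h0 : 0 ≤ σ) (h1 : σ ≤ 1 / 4) :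
    ‖(Complex.Gamma (1 / 2 - (σ : ℂ) + (γ : ℂ) * Complex.I) *
        (1 + 2 * (Real.pi : ℂ) * Complex.I * (θ : ℂ)) ^
          (-(1 / 2 - (σ : ℂ) + (γ : ℂ) * Complex.I)))‖ ≤
      10 * (1 + θ ^ 2) ^ (σ / 2) *
        (Complex.Gamma (1 / 2) *
          (1 + 2 * (Real.pi : ℂ) * Complex.I * (θ : ℂ)) ^ (-(1 / 2) : ℂ)).re := by
  set s : ℂ := 1 / 2 - (σ : ℂ) + (γ : ℂ) * Complex.I
  set a : ℂ := 1 + 2 * (π : ℂ) * Complex.I * θ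
  have hs_re : s.re = 1 / 2 - σ := by simp [s]
  have ha_re : a.re = 1 := by simp [a]
  have ha : 0 ≤ a.re := ha_re ▸ zero_le_one
  have ha0 : 0 < ‖a‖ := norm_pos_iff.2 fun h => by simp [h] at ha_re
  have hnorm : ‖a‖ ^ σ ≤ 2 * (1 + θ ^ 2) ^ (σ / 2) := norm_one_add_two_pi_mul_I_rpow_le θ h0 h1
  have hsqrtπ : 8 / 5 ≤ √π := Real.le_sqrt_of_sq_le (by nlinarith [Real.pi_gt_three])
  calc ‖Complex.Gamma s * a ^ (-s)‖ ≤ 4 * √2 * ‖a‖ ^ (-s.re) :=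
        Complex.norm_Gamma_mul_cpow_neg_le (by linarith) (by linarith) ha
    _ = 4 * √2 * ‖a‖ ^ σ * ‖a‖ ^ (-(1 / 2) : ℝ) := by
        rw [hs_re, neg_sub, sub_eq_add_neg, Real.rpow_add ha0]; ring
    _ ≤ 4 * √2 * (2 * (1 + θ ^ 2) ^ (σ / 2)) * ‖a‖ ^ (-(1 / 2) : ℝ) := by gcongr
    _ = 8 * (√2 * (1 + θ ^ 2) ^ (σ / 2) * ‖a‖ ^ (-(1 / 2) : ℝ)) := by ring
    _ ≤ 5 * √π * (√2 * (1 + θ ^ 2) ^ (σ / 2) * ‖a‖ ^ (-(1 / 2) : ℝ)) := by gcongr; linarith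
    _ = 10 * (1 + θ ^ 2) ^ (σ / 2) * (√π * (‖a‖ ^ (-(1 / 2) : ℝ) * (√2 / 2))) := by ring
    _ ≤ 10 * (1 + θ ^ 2) ^ (σ / 2) * (Complex.Gamma (1 / 2) * a ^ (-(1 / 2) : ℂ)).re := by
        gcongr; exact Complex.le_re_Gamma_one_half_mul_cpow ha
end

section
/- Let p be a prime, let n ≥ 1, and let a₁, a₂ be integers with min(v_p(a₁), v_p(a₂)) = n - r for some integer r ≥ 1 (where v_p denotes the p-adic valuation). If p is odd then |Σ_{x ∈ ℤ/p^nℤ} e((a₁x + a₂x²)/p^n)| ≤ p^{n - r/2}, and if p = 2 then |Σ_{x ∈ ℤ/2^nℤ} e((a₁x + a₂x²)/2^n)| ≤ 2^{1/2} · 2^{n - r/2}. -/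
/-!
Write `aᵢ = p^m bᵢ` with `m = n - r`, so that the sum is `p^m` times
`S = ∑_{x mod p^r} e((b₁x + b₂x²)/p^r)`, where `p` does not divide both `b₁` and `b₂`.
If `p ∣ b₂`, then `p ∤ b₁` and shifting `x` by `p^(r-1)` multiplies `S` by `e(b₁/p) ≠ 1`,
so `S = 0`. Otherwise `b₂` is a unit mod `p^r`, and Weyl differencing `x = y + h` gives
`|S|² = ∑_h e((b₁h + b₂h²)/p^r) ∑_y e(2b₂hy/p^r) ≤ p^r · #{h mod p^r | 2h ≡ 0}`;
that count is `1` for odd `p` and at most `2` for `p = 2`.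
-/

open Finset ComplexConjugate

lemma e_intCast_div_natCast (N : ℕ) [NeZero N] (j : ℤ) :
    e (j / N) = ZMod.stdAddChar (j : ZMod N) := by
  rw [ZMod.stdAddChar_coe, e]
  push_cast
  ring_nf

lemma ZMod.sum_range_natCast {M : Type*} [AddCommMonoid M] (N : ℕ) [NeZero N]
    (g : ZMod N → M) : ∑ x ∈ range N, g x = ∑ y, g y :=
  sum_nbij' (fun x => (x : ZMod N)) ZMod.val (by simp) (by simp [ZMod.val_lt])
    (fun x hx => ZMod.val_cast_of_lt (mem_range.1 hx)) (fun y _ => ZMod.natCast_zmod_val y)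
    (fun _ _ => rfl)

lemma ZMod.sum_range_mul_natCast {M : Type*} [AddCommMonoid M] (N : ℕ) [NeZero N]
    (g : ZMod N → M) (k : ℕ) : ∑ x ∈ range (k * N), g x = k • ∑ y, g y := by
  induction k with
  | zero => simp
  | succ k ih =>
    rw [add_mul, one_mul, sum_range_add, ih, succ_nsmul, ← ZMod.sum_range_natCast]
    simp

section QuadraticSum

variable {R : Type*} [CommRing R] [Fintype R]

def quadraticSum {R' : Type*} [CommRing R'] (ψ : AddChar R R') (b₁ b₂ : R) : R' :=
  ∑ x, ψ (b₁ * x + b₂ * x ^ 2)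

theorem quadraticSum_eq_zero_of_mul_eq_zero {R' : Type*} [CommRing R'] [IsDomain R']
    (ψ : AddChar R R') {b₁ b₂ t : R} (ht : b₂ * t = 0) (hψ : ψ (b₁ * t) ≠ 1) :
    quadraticSum ψ b₁ b₂ = 0 := by
  refine eq_zero_of_mul_eq_self_left hψ ?_
  rw [quadraticSum, mul_sum]
  conv_rhs => rw [← Equiv.sum_comp (Equiv.addRight t)]
  refine sum_congr rfl fun x _ => ?_
  rw [← AddChar.map_add_eq_mul, Equiv.coe_addRight]
  congr 1
  linear_combination (-(2 * x + t)) * ht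

theorem quadraticSum_mul_conj (ψ : AddChar R ℂ) (b₁ b₂ : R) :
    quadraticSum ψ b₁ b₂ * conj (quadraticSum ψ b₁ b₂) =
      ∑ h, ψ (b₁ * h + b₂ * h ^ 2) * ∑ y, ψ (y * (2 * b₂ * h)) := by
  calc quadraticSum ψ b₁ b₂ * conj (quadraticSum ψ b₁ b₂)
      = ∑ y, ∑ h, ψ (b₁ * (y + h) + b₂ * (y + h) ^ 2) * ψ (-(b₁ * y + b₂ * y ^ 2)) := by
        rw [quadraticSum, map_sum, sum_mul_sum, sum_comm]
        refine sum_congr rfl fun y _ => ?_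
        rw [← Equiv.sum_comp (Equiv.addLeft y)]
        simp only [Equiv.coe_addLeft, AddChar.map_neg_eq_conj]
    _ = ∑ y, ∑ h, ψ (b₁ * h + b₂ * h ^ 2) * ψ (y * (2 * b₂ * h)) := by
        refine sum_congr rfl fun y _ => sum_congr rfl fun h _ => ?_
        rw [← AddChar.map_add_eq_mul, ← AddChar.map_add_eq_mul]
        ring_nf
    _ = _ := by
        rw [sum_comm]
        simp_rw [mul_sum]

theorem norm_sq_quadraticSum_le [DecidableEq R] {ψ : AddChar R ℂ} (hψ : ψ.IsPrimitive)
    (b₁ b₂ : R) :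
    ‖quadraticSum ψ b₁ b₂‖ ^ 2 ≤ Fintype.card R * #{h | 2 * b₂ * h = 0} := by
  have hsq : ‖quadraticSum ψ b₁ b₂‖ ^ 2 =
      ‖quadraticSum ψ b₁ b₂ * conj (quadraticSum ψ b₁ b₂)‖ := by
    rw [norm_mul, Complex.norm_conj, sq]
  rw [hsq, quadraticSum_mul_conj]
  simp_rw [AddChar.sum_mulShift _ hψ]
  refine (norm_sum_le _ _).trans (le_of_eq ?_)
  simp only [norm_mul, AddChar.norm_apply, one_mul, Complex.norm_natCast]
  push_cast
  rw [sum_ite, sum_const_zero, add_zero, sum_const, nsmul_eq_mul, mul_comm]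

end QuadraticSum

lemma card_filter_mul_eq_zero_of_isUnit {R : Type*} [Ring R] [Fintype R] [DecidableEq R]
    {c : R} (hc : IsUnit c) : #{h | c * h = 0} = 1 := by
  simp [hc.mul_right_eq_zero, filter_eq']

lemma ZMod.card_filter_two_mul_eq_zero_of_odd {N : ℕ} [NeZero N] (hN : Odd N) :
    #{h : ZMod N | 2 * h = 0} = 1 :=
  card_filter_mul_eq_zero_of_isUnit <| by
    exact_mod_cast (ZMod.isUnit_iff_coprime 2 N).2 (Nat.coprime_two_left.2 hN)

lemma ZMod.card_filter_two_mul_eq_zero_le (N : ℕ) [NeZero N] :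
    #{h : ZMod N | 2 * h = 0} ≤ 2 := by
  classical
  convert IsAddCyclic.card_nsmul_eq_zero_le (α := ZMod N) two_pos using 3
  simp [two_mul]

theorem ZMod.norm_sq_quadraticSum_prime_pow_le {p r : ℕ} [Fact p.Prime] (hr : r ≠ 0)
    {b₁ b₂ : ℤ} (hb : ¬(p : ℤ) ∣ b₁ ∨ ¬(p : ℤ) ∣ b₂) :
    ‖quadraticSum ZMod.stdAddChar (b₁ : ZMod (p ^ r)) b₂‖ ^ 2 ≤
      p ^ r * #{h : ZMod (p ^ r) | 2 * h = 0} := by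
  have hp : p.Prime := Fact.out
  by_cases hb₂ : (p : ℤ) ∣ b₂
  · have hb₁ : ¬(p : ℤ) ∣ b₁ := hb.resolve_right (not_not_intro hb₂)
    obtain ⟨c, rfl⟩ := hb₂
    obtain ⟨s, rfl⟩ : ∃ s, r = s + 1 := ⟨r - 1, by omega⟩
    rw [quadraticSum_eq_zero_of_mul_eq_zero _ (t := ((p ^ s : ℕ) : ZMod (p ^ (s + 1))))]
    · rw [norm_zero, zero_pow two_ne_zero]
      positivity
    · rw [show ((p * c : ℤ) : ZMod (p ^ (s + 1))) * ((p ^ s : ℕ) : ZMod (p ^ (s + 1))) =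
          ((p ^ (s + 1) : ℕ) : ZMod (p ^ (s + 1))) * c by push_cast; ring,
        ZMod.natCast_self, zero_mul]
    · rw [← AddChar.map_zero_eq_one (ZMod.stdAddChar (N := p ^ (s + 1))),
        ZMod.injective_stdAddChar.ne_iff]
      intro h
      apply hb₁
      have : ((p : ℤ) ^ s * p) ∣ p ^ s * b₁ := by
        rw [← pow_succ, mul_comm]
        exact_mod_cast (ZMod.intCast_zmod_eq_zero_iff_dvd _ _).1 (by push_cast at h ⊢; exact h)
      exact (mul_dvd_mul_iff_left (pow_ne_zero s (by exact_mod_cast hp.ne_zero))).1 this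
  · have hunit : IsUnit (b₂ : ZMod (p ^ r)) := by
      rw [ZMod.coe_int_isUnit_iff_isCoprime, Nat.cast_pow]
      exact ((Nat.prime_iff_prime_int.1 hp).irreducible.coprime_iff_not_dvd.2 hb₂).pow_left
    refine (norm_sq_quadraticSum_le (ZMod.isPrimitive_stdAddChar _) _ _).trans (le_of_eq ?_)
    simp_rw [mul_comm 2 (b₂ : ZMod (p ^ r)), mul_assoc, hunit.mul_right_eq_zero, ZMod.card]
    push_cast
    rfl

lemma exists_eq_pow_min_padicValInt_mul {p : ℕ} [Fact p.Prime] {a₁ a₂ : ℤ} (ha₁ : a₁ ≠ 0)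
    (ha₂ : a₂ ≠ 0) : ∃ b₁ b₂ : ℤ,
      a₁ = p ^ min (padicValInt p a₁) (padicValInt p a₂) * b₁ ∧
      a₂ = p ^ min (padicValInt p a₁) (padicValInt p a₂) * b₂ ∧
      (¬(p : ℤ) ∣ b₁ ∨ ¬(p : ℤ) ∣ b₂) := by
  set m := min (padicValInt p a₁) (padicValInt p a₂)
  obtain ⟨b₁, hb₁⟩ := (padicValInt_dvd_iff m a₁).2 (Or.inr (min_le_left _ _))
  obtain ⟨b₂, hb₂⟩ := (padicValInt_dvd_iff m a₂).2 (Or.inr (min_le_right _ _))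
  refine ⟨b₁, b₂, hb₁, hb₂, ?_⟩
  have succ_le : ∀ {a b : ℤ}, a ≠ 0 → a = p ^ m * b → (p : ℤ) ∣ b → m + 1 ≤ padicValInt p a :=
    fun ha hab hb => ((padicValInt_dvd_iff (m + 1) _).1
      (hab ▸ pow_succ (p : ℤ) m ▸ mul_dvd_mul_left _ hb)).resolve_left ha
  by_contra! h
  have := le_min (succ_le ha₁ hb₁ h.1) (succ_le ha₂ hb₂ h.2)
  omega

lemma sum_range_e_quadratic (k N : ℕ) [NeZero N] (b₁ b₂ : ℤ) :
    ∑ x ∈ range (k * N), e (((b₁ * x + b₂ * x ^ 2 : ℤ) : ℝ) / N) =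
      k * quadraticSum ZMod.stdAddChar (b₁ : ZMod N) b₂ := by
  simp_rw [e_intCast_div_natCast]
  push_cast
  rw [ZMod.sum_range_mul_natCast N
    (fun y => ZMod.stdAddChar ((b₁ : ZMod N) * y + (b₂ : ZMod N) * y ^ 2)), nsmul_eq_mul,
    quadraticSum]

lemma sum_range_e_scaled_quadratic (k N : ℕ) [NeZero N] (b₁ b₂ : ℤ) :
    ∑ x ∈ range (k * N), e (((k * b₁ * x + k * b₂ * x ^ 2 : ℤ) : ℝ) / (k * N)) =
      k * quadraticSum ZMod.stdAddChar (b₁ : ZMod N) b₂ := by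
  rw [← sum_range_e_quadratic]
  refine sum_congr rfl fun x hx => ?_
  have hk : (k : ℝ) ≠ 0 := Nat.cast_ne_zero.2 (by rintro rfl; simp at hx)
  push_cast
  rw [mul_assoc, mul_assoc, ← mul_add, mul_div_mul_left _ _ hk]

lemma pow_mul_le_rpow_of_sq_le {p x K : ℝ} (hp : 0 < p) (hx : 0 ≤ x) {m r n : ℕ}
    (hn : m + r = n) (h : x ^ 2 ≤ p ^ r * K) :
    p ^ m * x ≤ K ^ (1 / 2 : ℝ) * p ^ ((n : ℝ) - r / 2) := by
  have hK : 0 ≤ K :=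
    (mul_nonneg_iff_of_pos_left (by positivity)).1 ((sq_nonneg x).trans h)
  have hsqrt : √(p ^ r) = p ^ ((r : ℝ) / 2) := by
    rw [Real.sqrt_eq_rpow, ← Real.rpow_natCast, ← Real.rpow_mul hp.le]
    ring_nf
  have hx' : x ≤ K ^ (1 / 2 : ℝ) * p ^ ((r : ℝ) / 2) := by
    rw [← Real.sqrt_eq_rpow, ← hsqrt, ← Real.sqrt_mul hK, mul_comm K]
    exact (Real.le_sqrt hx (by positivity)).2 h
  calc p ^ m * x ≤ p ^ m * (K ^ (1 / 2 : ℝ) * p ^ ((r : ℝ) / 2)) := by gcongr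
    _ = K ^ (1 / 2 : ℝ) * (p ^ (m : ℝ) * p ^ ((r : ℝ) / 2)) := by
        rw [Real.rpow_natCast]
        ring
    _ = K ^ (1 / 2 : ℝ) * p ^ ((n : ℝ) - r / 2) := by
        rw [← Real.rpow_add hp, ← hn]
        push_cast
        ring_nf

theorem quadratic_bd_general (p : ℕ) (hp : p.Prime) (n : ℕ)
    (a₁ a₂ : ℤ) (ha₁ : a₁ ≠ 0) (ha₂ : a₂ ≠ 0) (r : ℕ) (hr : 1 ≤ r)
    (hval : (min (padicValInt p a₁) (padicValInt p a₂) : ℤ) = (n : ℤ) - (r : ℤ)) :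
    (Odd p →
      ‖∑ x ∈ Finset.range (p ^ n),
          e (((a₁ * x + a₂ * x ^ 2 : ℤ) : ℝ) / (p : ℝ) ^ n)‖ ≤
        (p : ℝ) ^ ((n : ℝ) - (r : ℝ) / 2)) ∧
    (p = 2 →
      ‖∑ x ∈ Finset.range (2 ^ n),
          e (((a₁ * x + a₂ * x ^ 2 : ℤ) : ℝ) / (2 : ℝ) ^ n)‖ ≤
        (2 : ℝ) ^ ((1 : ℝ) / 2) * (2 : ℝ) ^ ((n : ℝ) - (r : ℝ) / 2)) := by
  have := Fact.mk hp
  obtain ⟨b₁, b₂, hb₁, hb₂, hb⟩ := exists_eq_pow_min_padicValInt_mul (p := p) ha₁ ha₂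
  set m := min (padicValInt p a₁) (padicValInt p a₂)
  have hmr : m + r = n := by omega
  have hsum :
      ‖∑ x ∈ range (p ^ n), e (((a₁ * x + a₂ * x ^ 2 : ℤ) : ℝ) / (p : ℝ) ^ n)‖ =
      (p : ℝ) ^ m * ‖quadraticSum ZMod.stdAddChar (b₁ : ZMod (p ^ r)) b₂‖ := by
    have := sum_range_e_scaled_quadratic (p ^ m) (p ^ r) b₁ b₂
    push_cast at this
    rw [hb₁, hb₂, ← hmr, pow_add, pow_add]
    push_cast
    rw [this, norm_mul, norm_pow, Complex.norm_natCast]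
  have hS := ZMod.norm_sq_quadraticSum_prime_pow_le (by omega : r ≠ 0) hb
  refine ⟨fun hodd => ?_, fun hp2 => ?_⟩
  · rw [ZMod.card_filter_two_mul_eq_zero_of_odd hodd.pow, Nat.cast_one] at hS
    rw [hsum]
    simpa using pow_mul_le_rpow_of_sq_le (Nat.cast_pos.2 hp.pos) (norm_nonneg _) hmr hS
  · subst hp2
    rw [Nat.cast_ofNat] at hsum
    rw [hsum]
    refine pow_mul_le_rpow_of_sq_le two_pos (norm_nonneg _) hmr (hS.trans ?_)
    push_cast
    gcongr
    exact_mod_cast ZMod.card_filter_two_mul_eq_zero_le (2 ^ r)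

/-- Lemma E.1: if `min(v_p(a₁), v_p(a₂)) = n - r` with `r ≥ 1`, then the quadratic
exponential sum `∑_{x ∈ ℤ/p^nℤ} e((a₁x + a₂x²)/p^n)` is at most `p^{n - r/2}` for odd
`p`, and at most `√2 · 2^{n - r/2}` for `p = 2`. -/
theorem quadratic_bd (p : ℕ) (hp : p.Prime) (n : ℕ) (hn : 1 ≤ n)
    (a₁ a₂ : ℤ) (ha₁ : a₁ ≠ 0) (ha₂ : a₂ ≠ 0) (r : ℕ) (hr : 1 ≤ r)
    (hval : (min (padicValInt p a₁) (padicValInt p a₂) : ℤ) = (n : ℤ) - (r : ℤ)) :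
    (Odd p →
      ‖∑ x ∈ Finset.range (p ^ n),
          e (((a₁ * x + a₂ * x ^ 2 : ℤ) : ℝ) / (p : ℝ) ^ n)‖ ≤
        (p : ℝ) ^ ((n : ℝ) - (r : ℝ) / 2)) ∧
    (p = 2 →
      ‖∑ x ∈ Finset.range (2 ^ n),
          e (((a₁ * x + a₂ * x ^ 2 : ℤ) : ℝ) / (2 : ℝ) ^ n)‖ ≤
        (2 : ℝ) ^ ((1 : ℝ) / 2) * (2 : ℝ) ^ ((n : ℝ) - (r : ℝ) / 2)) :=
  quadratic_bd_general p hp n a₁ a₂ ha₁ ha₂ r hr hval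
end

section
/- For all real x, y with 1/4 ≤ x ≤ 1/2: |Γ(x + iy)| ≤ 7 · e^{-π|y|/2}. -/
/-!
Along a horizontal line, `|Γ(σ + iy)| / Γ(σ)` is nondecreasing in `σ > 0`: in Euler's limit
`Γ(s) = lim n^s n! / (s (s+1) ⋯ (s+n))` each factor `(σ + j) / |σ + j + iy|` increases
with `σ`. Comparing `s = x + iy` with `1 - s̄ = (1 - x) + iy` for `x ≤ 1/2`, the reflection
formula `|Γ(s) Γ(1 - s̄)| = π / |sin πs|`, together with `Γ(x) Γ(1 - x) = π / sin πx` and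
`|sin πs| ≥ sin(πx) cosh(πy)`, gives `|Γ(x + iy)|² cosh(πy) ≤ Γ(x)²`. Finally
`Γ(x) ≤ 1/x ≤ 4`, as `Γ ≤ 1` on `[1, 2]` by convexity, and `cosh t ≥ e^|t| / 2`, so
`|Γ(x + iy)|² ≤ 32 e^{-π|y|}`.
-/

open Complex ComplexConjugate Filter Topology
open scoped Real

lemma Real.Gamma_add_one_le_one {x : ℝ} (h0 : 0 ≤ x) (h1 : x ≤ 1) :
    Real.Gamma (x + 1) ≤ 1 := by
  have hx : x + 1 ∈ segment ℝ (1 : ℝ) 2 := by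
    rw [segment_eq_Icc (by norm_num)]; constructor <;> linarith
  simpa [Real.Gamma_two] using
    Real.convexOn_Gamma.le_on_segment (by norm_num : (1 : ℝ) ∈ Set.Ioi 0)
      (by norm_num : (2 : ℝ) ∈ Set.Ioi 0) hx

lemma Real.Gamma_le_inv {x : ℝ} (h0 : 0 < x) (h1 : x ≤ 1) : Real.Gamma x ≤ x⁻¹ := by
  rw [← one_div, le_div_iff₀ h0, mul_comm, ← Real.Gamma_add_one h0.ne']
  exact Real.Gamma_add_one_le_one h0.le h1

lemma Complex.norm_GammaSeq (s : ℂ) {n : ℕ} (hn : n ≠ 0) :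
    ‖GammaSeq s n‖ =
      (n : ℝ) ^ s.re * n.factorial / ∏ j ∈ Finset.range (n + 1), ‖s + j‖ := by
  rw [GammaSeq, norm_div, norm_mul, norm_prod, norm_natCast_cpow_of_pos (Nat.pos_of_ne_zero hn)]
  simp

lemma Complex.norm_mul_re_le_norm_mul_re {s t : ℂ} (hs : 0 ≤ s.re) (hst : s.re ≤ t.re)
    (him : s.im = t.im) : ‖t‖ * s.re ≤ ‖s‖ * t.re := by
  have ht : 0 ≤ t.re := hs.trans hst
  refine le_of_pow_le_pow_left₀ two_ne_zero (by positivity) ?_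
  rw [mul_pow, mul_pow, Complex.sq_norm, Complex.sq_norm, normSq_apply, normSq_apply, ← him]
  nlinarith [mul_le_mul hst hst hs ht, sq_nonneg s.im]

lemma Complex.norm_GammaSeq_mul_GammaSeq_re_le {s t : ℂ} (hs : 0 < s.re) (hst : s.re ≤ t.re)
    (him : s.im = t.im) {n : ℕ} (hn : n ≠ 0) :
    ‖GammaSeq s n‖ * ‖GammaSeq t.re n‖ ≤ ‖GammaSeq t n‖ * ‖GammaSeq s.re n‖ := by
  have norm_ofReal_add_natCast {r : ℝ} (hr : 0 < r) (j : ℕ) : ‖(r + j : ℂ)‖ = r + j := by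
    rw [← ofReal_natCast, ← ofReal_add, norm_real, Real.norm_of_nonneg (by positivity)]
  have prod_norm_pos {u : ℂ} (hu : 0 < u.re) : 0 < ∏ j ∈ Finset.range (n + 1), ‖u + j‖ :=
    Finset.prod_pos fun j _ => norm_pos_iff.mpr fun h => by
      have := congrArg re h
      simp only [add_re, natCast_re, zero_re] at this
      linarith [j.cast_nonneg (α := ℝ)]
  simp only [norm_GammaSeq _ hn, ofReal_re, div_mul_div_comm]
  rw [mul_mul_mul_comm, mul_comm ((n : ℝ) ^ s.re), ← mul_mul_mul_comm]
  refine div_le_div_of_nonneg_left (by positivity)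
    (mul_pos (prod_norm_pos (hs.trans_le hst)) (prod_norm_pos (by simpa using hs))) ?_
  rw [← Finset.prod_mul_distrib, ← Finset.prod_mul_distrib]
  refine Finset.prod_le_prod (fun j _ => by positivity) fun j _ => ?_
  rw [norm_ofReal_add_natCast hs, norm_ofReal_add_natCast (hs.trans_le hst)]
  simpa using norm_mul_re_le_norm_mul_re (s := s + j) (t := t + j)
    (by simp only [add_re, natCast_re]; positivity) (by simpa using hst) (by simpa using him)

lemma Complex.norm_Gamma_mul_Gamma_re_le {s t : ℂ} (hs : 0 < s.re) (hst : s.re ≤ t.re)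
    (him : s.im = t.im) :
    ‖Gamma s‖ * Real.Gamma t.re ≤ ‖Gamma t‖ * Real.Gamma s.re := by
  have norm_GammaSeq_tendsto (u : ℂ) :
      Tendsto (fun n ↦ ‖GammaSeq u n‖) atTop (𝓝 ‖Gamma u‖) :=
    (continuous_norm.tendsto _).comp (GammaSeq_tendsto_Gamma u)
  have norm_Gamma_ofReal {r : ℝ} (hr : 0 < r) : ‖Gamma r‖ = Real.Gamma r := by
    rw [Gamma_ofReal, norm_real, Real.norm_of_nonneg (Real.Gamma_pos_of_pos hr).le]
  rw [← norm_Gamma_ofReal hs, ← norm_Gamma_ofReal (hs.trans_le hst)]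
  refine le_of_tendsto_of_tendsto ((norm_GammaSeq_tendsto s).mul (norm_GammaSeq_tendsto _))
    ((norm_GammaSeq_tendsto t).mul (norm_GammaSeq_tendsto _)) ?_
  filter_upwards [eventually_ne_atTop 0] with n hn
  exact norm_GammaSeq_mul_GammaSeq_re_le hs hst him hn

lemma Complex.norm_Gamma_mul_norm_Gamma_one_sub_conj (s : ℂ) :
    ‖Gamma s‖ * ‖Gamma (1 - conj s)‖ = π / ‖sin (π * s)‖ := by
  rw [← map_one (starRingEnd ℂ), ← map_sub, Gamma_conj, norm_conj, ← norm_mul,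
    Gamma_mul_Gamma_one_sub, norm_div, norm_real, Real.norm_of_nonneg Real.pi_pos.le]

lemma Complex.abs_sin_mul_cosh_le_norm_sin (a b : ℝ) :
    |Real.sin a| * Real.cosh b ≤ ‖sin (a + b * I)‖ := by
  have h : (sin (a + b * I)).re = Real.sin a * Real.cosh b := by
    rw [sin_add_mul_I]; simp [← ofReal_sin, ← ofReal_cos, ← ofReal_cosh, ← ofReal_sinh]
  rw [← abs_of_pos (Real.cosh_pos b), ← abs_mul, ← h]
  exact abs_re_le_norm _

lemma Complex.norm_Gamma_sq_mul_cosh_le {x : ℝ} (y : ℝ) (hx0 : 0 < x) (hx : x ≤ 1 / 2) :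
    ‖Gamma (x + y * I)‖ ^ 2 * Real.cosh (π * y) ≤ Real.Gamma x ^ 2 := by
  have hsin_pos : 0 < Real.sin (π * x) :=
    Real.sin_pos_of_pos_of_lt_pi (by positivity) (by nlinarith [Real.pi_pos])
  have hmono : ‖Gamma (x + y * I)‖ * Real.Gamma (1 - x) ≤
      ‖Gamma (1 - x + y * I)‖ * Real.Gamma x := by
    simpa using norm_Gamma_mul_Gamma_re_le (s := x + y * I) (t := 1 - x + y * I)
      (by simpa using hx0) (by simpa using (by linarith : x ≤ 1 - x)) (by simp)
  have hsin : Real.sin (π * x) * Real.cosh (π * y) ≤ ‖sin (π * (x + y * I))‖ := by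
    simpa [abs_of_pos hsin_pos, mul_add, mul_assoc] using
      abs_sin_mul_cosh_le_norm_sin (π * x) (π * y)
  have hrefl :
      ‖Gamma (x + y * I)‖ * ‖Gamma (1 - x + y * I)‖ * ‖sin (π * (x + y * I))‖
        = π := by
    have hM_pos := (mul_pos hsin_pos (Real.cosh_pos (π * y))).trans_le hsin
    have h := norm_Gamma_mul_norm_Gamma_one_sub_conj (x + y * I)
    rw [show 1 - conj ((x : ℂ) + y * I) = 1 - x + y * I by
      simp only [map_add, map_mul, conj_ofReal, conj_I]; ring] at h
    rw [h, div_mul_cancel₀ _ hM_pos.ne']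
  have hrefl_real : Real.Gamma x * Real.Gamma (1 - x) * Real.sin (π * x) = π := by
    rw [Real.Gamma_mul_Gamma_one_sub, div_mul_cancel₀ _ hsin_pos.ne']
  refine le_of_mul_le_mul_right ?_
    (mul_pos (Real.Gamma_pos_of_pos (by linarith : 0 < 1 - x)) hsin_pos)
  calc ‖Gamma (x + y * I)‖ ^ 2 * Real.cosh (π * y) * (Real.Gamma (1 - x) * Real.sin (π * x))
      = ‖Gamma (x + y * I)‖ * Real.Gamma (1 - x) * ‖Gamma (x + y * I)‖ *
          (Real.sin (π * x) * Real.cosh (π * y)) := by ring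
    _ ≤ ‖Gamma (1 - x + y * I)‖ * Real.Gamma x * ‖Gamma (x + y * I)‖ *
          ‖sin (π * (x + y * I))‖ := by gcongr
    _ = Real.Gamma x * π := by linear_combination Real.Gamma x * hrefl
    _ = Real.Gamma x ^ 2 * (Real.Gamma (1 - x) * Real.sin (π * x)) := by
      linear_combination -Real.Gamma x * hrefl_real

/-- Lemma F.1: for `1/4 ≤ x ≤ 1/2` and all real `y`, `|Γ(x + iy)| ≤ 7·e^{-π|y|/2}`. -/
theorem explicit_gamma_bound (x y : ℝ) (h1 : 1 / 4 ≤ x) (h2 : x ≤ 1 / 2) :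
    ‖Complex.Gamma ((x : ℂ) + (y : ℂ) * Complex.I)‖ ≤
      7 * Real.exp (-Real.pi * |y| / 2) := by
  have hx0 : 0 < x := by linarith
  have hΓ : Real.Gamma x ≤ 4 :=
    (Real.Gamma_le_inv hx0 (by linarith)).trans (inv_le_of_inv_le₀ (by norm_num) (by linarith))
  have hcosh : Real.exp (π * |y|) ≤ 2 * Real.cosh (π * y) := by
    rw [← Real.cosh_abs, abs_mul, abs_of_pos Real.pi_pos, Real.cosh_eq]
    linarith [Real.exp_pos (-(π * |y|))]
  have hexp : (7 * Real.exp (-π * |y| / 2)) ^ 2 * Real.exp (π * |y|) = 49 := by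
    rw [mul_pow, ← Real.exp_nat_mul, mul_assoc, ← Real.exp_add, Nat.cast_ofNat,
      show 2 * (-π * |y| / 2) + π * |y| = 0 by ring, Real.exp_zero]
    norm_num
  refine le_of_pow_le_pow_left₀ two_ne_zero (by positivity) ?_
  refine le_of_mul_le_mul_right ?_ (Real.exp_pos (π * |y|))
  calc ‖Gamma (x + y * I)‖ ^ 2 * Real.exp (π * |y|)
      ≤ ‖Gamma (x + y * I)‖ ^ 2 * (2 * Real.cosh (π * y)) := by gcongr
    _ = 2 * (‖Gamma (x + y * I)‖ ^ 2 * Real.cosh (π * y)) := by ring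
    _ ≤ 2 * Real.Gamma x ^ 2 := by gcongr; exact norm_Gamma_sq_mul_cosh_le y hx0 h2
    _ ≤ 49 := by nlinarith [Real.Gamma_pos_of_pos hx0]
    _ = _ := hexp.symm
end
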